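/- arXiv:math/0606566 — 2 statements merged into one kernel-verified Lean document; each statement's English description precedes it below -/
import Mathlib

section
/- The generating polynomial for the hyperoctahedral group B_n by the statistic (fix^+, fix^-, neg) equals the sum over decompositions i+j+k+l=n of multinomial(n; i,j,k,l) * Y0^i * Y1^j * Z^(j+k) * d_{k+l}, where d_m is the number of derangements of an m-element set. -/
open Finset

attribute [local instance] Classical.propDecidable

noncomputable section

/-- The word `x_1 x_2 ... x_n` (0-indexed) of a signed permutation of order `n`,
encoded as a pair (permutation, signs): `x_i = ±(σ(i)+1)`. -/
def sword (n : ℕ) (w : Equiv.Perm (Fin n) × (Fin n → Bool)) : ℕ → ℤ :=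
  fun i => if h : i < n then
      (if w.2 ⟨i, h⟩ then -(((w.1 ⟨i, h⟩ : ℕ) : ℤ) + 1) else (((w.1 ⟨i, h⟩ : ℕ) : ℤ) + 1))
    else 0

/-- number of negative letters -/
def negStat (n : ℕ) (x : ℕ → ℤ) : ℕ := ((Finset.range n).filter (fun i => x i < 0)).card

/-- number of positive fixed points (`x_i = i`, 1-indexed) -/
def fixPlus (n : ℕ) (x : ℕ → ℤ) : ℕ :=
  ((Finset.range n).filter (fun i => x i = (i : ℤ) + 1)).card

/-- number of negative fixed points (`x_i = -i`, 1-indexed) -/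
def fixMinus (n : ℕ) (x : ℕ → ℤ) : ℕ :=
  ((Finset.range n).filter (fun i => x i = -((i : ℤ) + 1))).card

/-- major index of the word -/
def majStat (n : ℕ) (x : ℕ → ℤ) : ℕ :=
  ∑ i ∈ Finset.range (n - 1), if x (i + 1) < x i then i + 1 else 0

/-- number of inversions of the word -/
def invStat (n : ℕ) (x : ℕ → ℤ) : ℕ :=
  ((Finset.range n ×ˢ Finset.range n).filter (fun p => p.1 < p.2 ∧ x p.2 < x p.1)).card

/-- length function `ℓ(w) = inv w + ∑_{x_i<0} |x_i|` -/
def lenStat (n : ℕ) (x : ℕ → ℤ) : ℕ :=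
  invStat n x + ∑ i ∈ Finset.range n, if x i < 0 then (x i).natAbs else 0

/-- flag-major index `fmaj = 2 maj + neg` -/
def fmajStat (n : ℕ) (x : ℕ → ℤ) : ℕ := 2 * majStat n x + negStat n x

/-- the word `x_0 ... x_{m-1}` has its leftmost trough at position `2k` (1-indexed):
`x_1 > x_2 > ... > x_{2k}` and `x_{2k} < x_{2k+1}` (with `x_{m+1} = ∞`). -/
def IsDesarAt (m k : ℕ) (x : ℕ → ℤ) : Prop :=
  1 ≤ k ∧ 2 * k ≤ m ∧ (∀ i, i + 1 < 2 * k → x (i + 1) < x i) ∧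
    (2 * k = m ∨ x (2 * k - 1) < x (2 * k))

/-- a word of length `m` is a desarrangement (empty word included) -/
def IsDesar (m : ℕ) (x : ℕ → ℤ) : Prop :=
  m = 0 ∨ ∃ k, IsDesarAt m k x

/-- the length of the longest right factor of the word of length `n`
which is a desarrangement -/
def dlen (n : ℕ) (x : ℕ → ℤ) : ℕ :=
  sSup {m | m ≤ n ∧ IsDesar m (fun i => x (n - m + i))}

/-- number of letters of `w^-` in the pixed factorization `w = w^- w^+ w^d` -/
def pixMinus (n : ℕ) (x : ℕ → ℤ) : ℕ :=
  ((Finset.range (n - dlen n x)).filter (fun i => x i < 0)).card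

/-- number of letters of `w^+` in the pixed factorization `w = w^- w^+ w^d` -/
def pixPlus (n : ℕ) (x : ℕ → ℤ) : ℕ :=
  ((Finset.range (n - dlen n x)).filter (fun i => 0 < x i)).card

/-- the number of derangements of an `m`-element set -/
def dnum (m : ℕ) : ℕ :=
  (Finset.univ.filter (fun σ : Equiv.Perm (Fin m) => ∀ i, σ i ≠ i)).card

/-- the word of an ordinary permutation of `{1, ..., m}` -/
def pword (m : ℕ) (σ : Equiv.Perm (Fin m)) : ℕ → ℤ :=
  fun i => if h : i < m then ((σ ⟨i, h⟩ : ℕ) : ℤ) + 1 else 0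

/-- the q-ascending factorial `(q;q)_m` -/
def qq {K : Type*} [CommRing K] (q : K) (m : ℕ) : K :=
  ∏ i ∈ Finset.range m, (1 - q ^ (i + 1))

/-- `D_m(q)`: generating polynomial for derangements of order `m` by major index -/
def Dmaj {K : Type*} [CommRing K] (q : K) (m : ℕ) : K :=
  ∑ σ ∈ Finset.univ.filter (fun σ : Equiv.Perm (Fin m) => ∀ i, σ i ≠ i),
    q ^ majStat m (pword m σ)


open Equiv in
theorem aux_dnum_eq (m : ℕ) : dnum m = numDerangements m := by
  rw [dnum, ← card_derangements_fin_eq_numDerangements, ← Fintype.card_subtype]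
  exact Fintype.card_congr (Equiv.subtypeEquivRight (fun f => Iff.rfl))

open Equiv in
theorem aux_card_fixed_eq (n : ℕ) (S : Finset (Fin n)) :
    (Finset.univ.filter (fun σ : Equiv.Perm (Fin n) =>
      Finset.univ.filter (fun i => σ i = i) = S)).card = dnum (n - S.card) := by
  rw [aux_dnum_eq]
  have e1 : {σ : Equiv.Perm (Fin n) // Finset.univ.filter (fun i => σ i = i) = S}
      ≃ {f : Equiv.Perm (Fin n) // ∀ a, ¬(a ∉ S) ↔ a ∈ Function.fixedPoints f} := by
    apply Equiv.subtypeEquivRight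
    intro f
    constructor
    · intro h a
      rw [not_not]
      rw [← h]
      simp [Function.mem_fixedPoints, Function.IsFixedPt]
    · intro h
      ext a
      have := h a
      rw [not_not] at this
      simp only [mem_filter, mem_univ, true_and]
      simp only [Function.mem_fixedPoints, Function.IsFixedPt] at this
      tauto
  have e2 := (derangements.subtypeEquiv (fun a : Fin n => a ∉ S)).symm
  have e3 := (e1.trans e2).symm
  have hc : Fintype.card {a : Fin n // a ∉ S} = n - S.card := by
    simp [Fintype.card_subtype_compl, Fintype.card_coe]
  calc (Finset.univ.filter (fun σ : Equiv.Perm (Fin n) =>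
      Finset.univ.filter (fun i => σ i = i) = S)).card
      = Fintype.card {σ : Equiv.Perm (Fin n) // Finset.univ.filter (fun i => σ i = i) = S} :=
        (Fintype.card_subtype _).symm
    _ = Fintype.card (derangements {a : Fin n // a ∉ S}) := (Fintype.card_congr e3.symm)
    _ = numDerangements (Fintype.card {a : Fin n // a ∉ S}) :=
        card_derangements_eq_numDerangements _
    _ = numDerangements (n - S.card) := by rw [hc]

theorem aux_perm_sum (n : ℕ) (R : Type*) [CommRing R] (A B : R) :
    ∑ σ : Equiv.Perm (Fin n),
      A ^ (Finset.univ.filter (fun i => σ i = i)).card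
        * B ^ (n - (Finset.univ.filter (fun i => σ i = i)).card)
    = ∑ f ∈ range (n+1), (n.choose f : R) * (dnum (n-f) : R) * A ^ f * B ^ (n-f) := by
  rw [← Finset.sum_fiberwise_of_maps_to
    (g := fun σ : Equiv.Perm (Fin n) => Finset.univ.filter (fun i => σ i = i))
    (t := (Finset.univ : Finset (Fin n)).powerset) (fun σ _ => by simp)]
  have step1 : ∀ S ∈ (Finset.univ : Finset (Fin n)).powerset,
      (∑ σ ∈ Finset.univ.filter (fun σ : Equiv.Perm (Fin n) =>
          Finset.univ.filter (fun i => σ i = i) = S),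
        A ^ (Finset.univ.filter (fun i => σ i = i)).card
          * B ^ (n - (Finset.univ.filter (fun i => σ i = i)).card))
      = (dnum (n - S.card) : R) * (A ^ S.card * B ^ (n - S.card)) := by
    intro S _
    rw [Finset.sum_congr rfl (fun σ hσ => by
      rw [(Finset.mem_filter.mp hσ).2])]
    rw [Finset.sum_const, aux_card_fixed_eq, nsmul_eq_mul]
  rw [Finset.sum_congr rfl step1]
  rw [← Finset.sum_fiberwise_of_maps_to
    (g := fun S : Finset (Fin n) => S.card) (t := range (n+1))
    (fun S _ => by
      rw [Finset.mem_range]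
      simpa using Nat.lt_succ_of_le (le_trans (Finset.card_le_univ S) (by simp)))]
  apply Finset.sum_congr rfl
  intro f hf
  have : ∀ S ∈ (Finset.univ : Finset (Fin n)).powerset.filter (fun S => S.card = f),
      (dnum (n - S.card) : R) * (A ^ S.card * B ^ (n - S.card))
      = (dnum (n - f) : R) * (A ^ f * B ^ (n - f)) := by
    intro S hS
    rw [(Finset.mem_filter.mp hS).2]
  rw [Finset.sum_congr rfl this, Finset.sum_const, nsmul_eq_mul]
  have : ((Finset.univ : Finset (Fin n)).powerset.filter (fun S => S.card = f)).card
      = n.choose f := by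
    rw [← Finset.powersetCard_eq_filter, Finset.card_powersetCard, Finset.card_univ,
      Fintype.card_fin]
  rw [this]; ring

open Nat in
theorem aux_multinomial_four (i j k l : ℕ) : Nat.multinomial Finset.univ ![i,j,k,l]
    = (i+j+k+l).choose (i+j) * ((i+j).choose i * (k+l).choose k) := by
  have h := Nat.multinomial_spec (Finset.univ : Finset (Fin 4)) ![i,j,k,l]
  rw [Fin.prod_univ_four, Fin.sum_univ_four] at h
  simp only [Matrix.cons_val_zero, Matrix.cons_val_one, Matrix.head_cons,
    Matrix.cons_val_two, Matrix.tail_cons, Matrix.cons_val_three] at h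
  have h1 : (i+j).choose i * i ! * j ! = (i+j)! := by
    rw [Nat.choose_symm_add]; exact Nat.add_choose_mul_factorial_mul_factorial i j
  have h2 : (k+l).choose k * k ! * l ! = (k+l)! := by
    rw [Nat.choose_symm_add]; exact Nat.add_choose_mul_factorial_mul_factorial k l
  have h3 : ((i+j)+(k+l)).choose (i+j) * (i+j)! * (k+l)! = ((i+j)+(k+l))! := by
    rw [Nat.choose_symm_add]; exact Nat.add_choose_mul_factorial_mul_factorial (i+j) (k+l)
  have key : (i ! * j ! * k ! * l !) * ((i+j+k+l).choose (i+j) * ((i+j).choose i * (k+l).choose k))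
      = (i+j+k+l)! := by
    calc (i ! * j ! * k ! * l !) * ((i+j+k+l).choose (i+j) * ((i+j).choose i * (k+l).choose k))
        = ((i+j+k+l).choose (i+j)) * ((i+j).choose i * i ! * j !) * ((k+l).choose k * k ! * l !) := by
          ring
      _ = ((i+j)+(k+l)).choose (i+j) * (i+j)! * (k+l)! := by rw [h1, h2]; ring_nf
      _ = (i+j+k+l)! := by rw [h3]; ring_nf
  have hpos : 0 < i ! * j ! * k ! * l ! := by positivity
  apply Nat.eq_of_mul_eq_mul_left hpos
  rw [key]; exact h

theorem aux_rhs_eq (n : ℕ) (R : Type*) [CommRing R] (Y0 Y1 Z : R) :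
    ∑ c ∈ Finset.Nat.antidiagonalTuple 4 n,
        (Nat.multinomial Finset.univ c : R) * Y0 ^ c 0 * Y1 ^ c 1 * Z ^ (c 1 + c 2) *
          (dnum (c 2 + c 3) : R)
    = ∑ f ∈ range (n+1), (n.choose f : R) * (dnum (n-f) : R) * (Y0+Y1*Z)^f * (1+Z)^(n-f) := by
  have expand : ∀ f ∈ range (n+1),
      (n.choose f : R) * (dnum (n-f) : R) * (Y0+Y1*Z)^f * (1+Z)^(n-f)
      = ∑ p ∈ (range (f+1)) ×ˢ (range (n-f+1)),
          (n.choose f : R) * (dnum (n-f) : R) *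
            (Y0 ^ p.1 * (Y1*Z) ^ (f - p.1) * ((f.choose p.1 : R)))
            * (Z ^ p.2 * ((n-f).choose p.2 : R)) := by
    intro f _
    rw [add_pow, add_comm (1:R) Z, add_pow]
    simp only [one_pow, mul_one]
    rw [mul_assoc, Finset.sum_mul_sum, Finset.mul_sum, Finset.sum_product]
    apply Finset.sum_congr rfl; intro i _
    rw [Finset.mul_sum]
    apply Finset.sum_congr rfl; intro k _
    ring
  rw [Finset.sum_congr rfl expand]
  rw [Finset.sum_sigma']
  apply Finset.sum_nbij' (i := fun c : Fin 4 → ℕ => (⟨c 0 + c 1, (c 0, c 2)⟩ :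
      Σ _f : ℕ, ℕ × ℕ))
    (j := fun x : Σ _f : ℕ, ℕ × ℕ => ![x.2.1, x.1 - x.2.1, x.2.2, n - x.1 - x.2.2])
  · intro c hc
    rw [Finset.Nat.mem_antidiagonalTuple, Fin.sum_univ_four] at hc
    simp only [Finset.mem_sigma, Finset.mem_product, Finset.mem_range]
    omega
  · intro x hx
    simp only [Finset.mem_sigma, Finset.mem_product, Finset.mem_range] at hx
    rw [Finset.Nat.mem_antidiagonalTuple, Fin.sum_univ_four]
    simp only [Matrix.cons_val_zero, Matrix.cons_val_one, Matrix.head_cons,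
      Matrix.cons_val_two, Matrix.tail_cons, Matrix.cons_val_three]
    omega
  · intro c hc
    rw [Finset.Nat.mem_antidiagonalTuple, Fin.sum_univ_four] at hc
    funext a
    match a with
    | 0 => show c 0 = c 0; rfl
    | 1 => show c 0 + c 1 - c 0 = c 1; omega
    | 2 => show c 2 = c 2; rfl
    | 3 => show n - (c 0 + c 1) - c 2 = c 3; omega
  · intro x hx
    simp only [Finset.mem_sigma, Finset.mem_product, Finset.mem_range] at hx
    simp only [Matrix.cons_val_zero, Matrix.cons_val_one, Matrix.head_cons,
      Matrix.cons_val_two, Matrix.tail_cons, Matrix.cons_val_three]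
    obtain ⟨f, i, k⟩ := x
    simp only at hx ⊢
    have h : i + (f - i) = f := by omega
    rw [h]
  · intro c hc
    rw [Finset.Nat.mem_antidiagonalTuple, Fin.sum_univ_four] at hc
    have hc4 : c = ![c 0, c 1, c 2, c 3] := by
      funext a; fin_cases a <;> rfl
    rw [hc4, aux_multinomial_four]
    have h1 : c 0 + c 1 + c 2 + c 3 = n := by omega
    simp only [Matrix.cons_val_zero, Matrix.cons_val_one, Matrix.head_cons,
      Matrix.cons_val_two, Matrix.tail_cons, Matrix.cons_val_three]
    have h3 : c 0 + c 1 - c 0 = c 1 := by omega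
    have h4 : n - (c 0 + c 1) = c 2 + c 3 := by omega
    rw [h1, h3, h4]
    push_cast
    ring

theorem aux_filter_range_card (n : ℕ) (p : ℕ → Prop) [DecidablePred p] (q : Fin n → Prop)
    [DecidablePred q] (h : ∀ i : Fin n, p i ↔ q i) :
    ((range n).filter p).card = ((Finset.univ : Finset (Fin n)).filter q).card := by
  rw [Finset.card_filter, Finset.card_filter,
    ← Fin.sum_univ_eq_sum_range (fun i => if p i then 1 else 0)]
  exact Finset.sum_congr rfl (fun i _ => by simp only [h i])

theorem aux_fixPlus_eq (n : ℕ) (w : Equiv.Perm (Fin n) × (Fin n → Bool)) :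
    fixPlus n (sword n w)
      = ((Finset.univ : Finset (Fin n)).filter (fun i => w.1 i = i ∧ w.2 i = false)).card := by
  rw [fixPlus]; apply aux_filter_range_card
  intro i
  have h1 : (0:ℤ) ≤ ((w.1 i : ℕ) : ℤ) := Int.natCast_nonneg _
  have h2 : (0:ℤ) ≤ ((i : ℕ) : ℤ) := Int.natCast_nonneg _
  cases hb : w.2 i
  · simp only [sword, i.isLt, dif_pos, Fin.eta, hb, Bool.false_eq_true, if_false, and_true]
    constructor
    · intro h
      exact Fin.ext (by omega)
    · intro h; rw [h]
  · simp only [sword, i.isLt, dif_pos, Fin.eta, hb, if_true, Bool.true_eq_false, and_false,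
      iff_false]
    intro h; omega

theorem aux_fixMinus_eq (n : ℕ) (w : Equiv.Perm (Fin n) × (Fin n → Bool)) :
    fixMinus n (sword n w)
      = ((Finset.univ : Finset (Fin n)).filter (fun i => w.1 i = i ∧ w.2 i = true)).card := by
  rw [fixMinus]; apply aux_filter_range_card
  intro i
  have h1 : (0:ℤ) ≤ ((w.1 i : ℕ) : ℤ) := Int.natCast_nonneg _
  have h2 : (0:ℤ) ≤ ((i : ℕ) : ℤ) := Int.natCast_nonneg _
  cases hb : w.2 i
  · simp only [sword, i.isLt, dif_pos, Fin.eta, hb, Bool.false_eq_true, if_false, and_false,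
      iff_false]
    intro h; omega
  · simp only [sword, i.isLt, dif_pos, Fin.eta, hb, if_true, and_true]
    constructor
    · intro h
      exact Fin.ext (by omega)
    · intro h; rw [h]

theorem aux_negStat_eq (n : ℕ) (w : Equiv.Perm (Fin n) × (Fin n → Bool)) :
    negStat n (sword n w)
      = ((Finset.univ : Finset (Fin n)).filter (fun i => w.2 i = true)).card := by
  rw [negStat]; apply aux_filter_range_card
  intro i
  have h1 : (0:ℤ) ≤ ((w.1 i : ℕ) : ℤ) := Int.natCast_nonneg _
  cases hb : w.2 i
  · simp only [sword, i.isLt, dif_pos, Fin.eta, hb, Bool.false_eq_true, if_false, iff_false]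
    omega
  · simp only [sword, i.isLt, dif_pos, Fin.eta, hb, if_true, iff_true]
    omega

theorem aux_pow_card_eq_prod {R : Type*} [CommRing R] (n : ℕ) (q : Fin n → Prop)
    [DecidablePred q] (c : R) :
    c ^ ((Finset.univ : Finset (Fin n)).filter q).card
      = ∏ i : Fin n, if q i then c else 1 := by
  rw [← Finset.prod_const, Finset.prod_filter]

theorem aux_eps_sum (n : ℕ) {R : Type*} [CommRing R] (Y0 Y1 Z : R) (σ : Equiv.Perm (Fin n)) :
    ∑ ε : Fin n → Bool,
      Y0 ^ ((Finset.univ : Finset (Fin n)).filter (fun i => σ i = i ∧ ε i = false)).card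
        * Y1 ^ ((Finset.univ : Finset (Fin n)).filter (fun i => σ i = i ∧ ε i = true)).card
        * Z ^ ((Finset.univ : Finset (Fin n)).filter (fun i => ε i = true)).card
    = (Y0 + Y1 * Z) ^ ((Finset.univ : Finset (Fin n)).filter (fun i => σ i = i)).card
        * (1 + Z) ^ (n - ((Finset.univ : Finset (Fin n)).filter (fun i => σ i = i)).card) := by
  set g : Fin n → Bool → R := fun i b =>
    if σ i = i then (if b then Y1 * Z else Y0) else (if b then Z else 1) with hg
  have key : ∀ ε : Fin n → Bool,
      Y0 ^ ((Finset.univ : Finset (Fin n)).filter (fun i => σ i = i ∧ ε i = false)).card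
        * Y1 ^ ((Finset.univ : Finset (Fin n)).filter (fun i => σ i = i ∧ ε i = true)).card
        * Z ^ ((Finset.univ : Finset (Fin n)).filter (fun i => ε i = true)).card
      = ∏ i : Fin n, g i (ε i) := by
    intro ε
    rw [aux_pow_card_eq_prod, aux_pow_card_eq_prod, aux_pow_card_eq_prod,
      ← Finset.prod_mul_distrib, ← Finset.prod_mul_distrib]
    apply Finset.prod_congr rfl
    intro i _
    by_cases h : σ i = i <;> cases hb : ε i <;> simp [hg, h, hb]
  rw [Finset.sum_congr rfl (fun ε _ => key ε)]
  have h5 := (Finset.prod_univ_sum (fun _ : Fin n => (Finset.univ : Finset Bool)) g).symm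
  rw [Fintype.piFinset_univ] at h5
  rw [h5]
  have step : ∀ i : Fin n, (∑ b ∈ (Finset.univ : Finset Bool), g i b)
      = if σ i = i then Y0 + Y1 * Z else 1 + Z := by
    intro i
    rw [Fintype.sum_bool]
    by_cases h : σ i = i <;> simp [hg, h] <;> ring
  rw [Finset.prod_congr rfl (fun i _ => step i)]
  rw [Finset.prod_ite, Finset.prod_const, Finset.prod_const]
  congr 1
  have h2 := Finset.card_filter_add_card_filter_not
    (s := (Finset.univ : Finset (Fin n))) (p := fun i => σ i = i)
  rw [Finset.card_univ, Fintype.card_fin] at h2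
  congr 1
  omega

theorem stmt0 (n : ℕ) (R : Type*) [CommRing R] (Y0 Y1 Z : R) :
    (∑ w : Equiv.Perm (Fin n) × (Fin n → Bool),
        Y0 ^ fixPlus n (sword n w) * Y1 ^ fixMinus n (sword n w) * Z ^ negStat n (sword n w))
      = ∑ c ∈ Finset.Nat.antidiagonalTuple 4 n,
          (Nat.multinomial Finset.univ c : R) * Y0 ^ c 0 * Y1 ^ c 1 * Z ^ (c 1 + c 2) *
            (dnum (c 2 + c 3) : R) := by
  rw [aux_rhs_eq n R Y0 Y1 Z, ← aux_perm_sum n R (Y0 + Y1 * Z) (1 + Z)]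
  rw [Fintype.sum_prod_type]
  apply Finset.sum_congr rfl
  intro σ _
  rw [Finset.sum_congr rfl (fun ε _ => by
    rw [aux_fixPlus_eq n (σ, ε), aux_fixMinus_eq n (σ, ε), aux_negStat_eq n (σ, ε)])]
  exact aux_eps_sum n Y0 Y1 Z σ
end
end

section
/- For every n ≥ 0, the generating polynomial of B_n by (fix^+, fix^-, neg) equals the generating polynomial of B_n by (pix^+, pix^-, neg); that is, sum over w in B_n of Y0^{fix^+ w} Y1^{fix^- w} Z^{neg w} equals sum over w in B_n of Y0^{pix^+ w} Y1^{pix^- w} Z^{neg w}. -/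
open Finset

attribute [local instance] Classical.propDecidable

noncomputable section

/-! ### Auxiliary combinatorics -/

section DesarTheory

/-- cardinality of `{i : Fin n | i < q}` -/
lemma card_filter_lt_fin (n q : ℕ) (hq : q ≤ n) :
    (Finset.univ.filter fun i : Fin n => (i : ℕ) < q).card = q := by
  have he : (Finset.univ.filter fun i : Fin n => (i : ℕ) < q)
      = Finset.attachFin (Finset.range q)
        (fun m hm => lt_of_lt_of_le (Finset.mem_range.1 hm) hq) := by
    ext i
    simp [Finset.mem_attachFin]
  rw [he, Finset.card_attachFin, Finset.card_range]

lemma isDesarAt_congr {m k : ℕ} {x y : ℕ → ℤ}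
    (h : ∀ i j, i < m → j < m → (x i < x j ↔ y i < y j)) :
    IsDesarAt m k x → IsDesarAt m k y := by
  rintro ⟨hk, hkm, hdec, hend⟩
  refine ⟨hk, hkm, fun i hi => ?_, ?_⟩
  · exact (h (i+1) i (by omega) (by omega)).1 (hdec i hi)
  · rcases hend with he | ha
    · exact Or.inl he
    · by_cases hm : 2 * k = m
      · exact Or.inl hm
      · exact Or.inr ((h (2*k-1) (2*k) (by omega) (by omega)).1 ha)

lemma isDesar_congr {m : ℕ} {x y : ℕ → ℤ}
    (h : ∀ i j, i < m → j < m → (x i < x j ↔ y i < y j)) :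
    IsDesar m x ↔ IsDesar m y := by
  constructor
  · rintro (h0 | ⟨k, hk⟩)
    · exact Or.inl h0
    · exact Or.inr ⟨k, isDesarAt_congr h hk⟩
  · rintro (h0 | ⟨k, hk⟩)
    · exact Or.inl h0
    · exact Or.inr ⟨k, isDesarAt_congr (fun i j hi hj => (h i j hi hj).symm) hk⟩

/-- length of the maximal strictly decreasing run of the suffix starting at `p` -/
def drun (x : ℕ → ℤ) (n : ℕ) (p : ℕ) : ℕ :=
  if _h : p < n then
    (if p + 1 < n ∧ x (p + 1) < x p then drun x n (p + 1) + 1 else 1)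
  else 0
termination_by n - p
decreasing_by omega

lemma drun_spec (x : ℕ → ℤ) (n : ℕ) : ∀ m p, n - p ≤ m → p < n →
    (1 ≤ drun x n p ∧ p + drun x n p ≤ n ∧
     (∀ i, p ≤ i → i + 1 < p + drun x n p → x (i + 1) < x i) ∧
     (p + drun x n p = n ∨
       (¬ x (p + drun x n p) < x (p + drun x n p - 1) →
          x (p + drun x n p - 1) < x (p + drun x n p) ∨
          x (p + drun x n p - 1) = x (p + drun x n p)))) := by
  intro m
  induction m with
  | zero => intro p hm hp; omega
  | succ m ih =>
    intro p hm hp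
    rw [drun, dif_pos hp]
    by_cases hc : p + 1 < n ∧ x (p + 1) < x p
    · rw [if_pos hc]
      obtain ⟨h1, h2, h3, h4⟩ := ih (p+1) (by omega) hc.1
      refine ⟨by omega, by omega, fun i hpi hi => ?_, ?_⟩
      · rcases Nat.eq_or_lt_of_le hpi with rfl | hpi'
        · exact hc.2
        · exact h3 i (by omega) (by omega)
      · have : p + (drun x n (p+1) + 1) = (p+1) + drun x n (p+1) := by omega
        rw [this]; exact h4
    · rw [if_neg hc]
      refine ⟨le_refl 1, by omega, fun i hpi hi => by omega, ?_⟩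
      by_cases hn : p + 1 = n
      · exact Or.inl hn
      · refine Or.inr fun hlt => ?_
        simp only [show p + 1 - 1 = p by omega]
        have : ¬ x (p+1) < x p := fun hh => hc ⟨by omega, hh⟩
        rcases lt_trichotomy (x p) (x (p+1)) with h | h | h
        · exact Or.inl h
        · exact Or.inr h
        · exact absurd h this

lemma drun_pos {x : ℕ → ℤ} {n p : ℕ} (hp : p < n) : 1 ≤ drun x n p :=
  (drun_spec x n (n - p) p le_rfl hp).1

lemma drun_add_le {x : ℕ → ℤ} {n p : ℕ} (hp : p < n) : p + drun x n p ≤ n :=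
  (drun_spec x n (n - p) p le_rfl hp).2.1

lemma drun_desc {x : ℕ → ℤ} {n p : ℕ} (hp : p < n) :
    ∀ i, p ≤ i → i + 1 < p + drun x n p → x (i + 1) < x i :=
  (drun_spec x n (n - p) p le_rfl hp).2.2.1

lemma drun_ge {x : ℕ → ℤ} {n : ℕ} : ∀ j p, p + j ≤ n → 1 ≤ j →
    (∀ i, p ≤ i → i + 1 < p + j → x (i + 1) < x i) → j ≤ drun x n p := by
  intro j
  induction j with
  | zero => intro p _ h1 _; omega
  | succ j ih =>
    intro p hj h1 hdec
    by_cases hj0 : j = 0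
    · subst hj0; exact drun_pos (by omega)
    · have hrec : drun x n p = drun x n (p+1) + 1 := by
        rw [drun, dif_pos (show p < n by omega), if_pos]
        exact ⟨by omega, hdec p le_rfl (by omega)⟩
      rw [hrec]
      have := ih (p+1) (by omega) (by omega)
        (fun i hpi hi => hdec i (by omega) (by omega))
      omega

/-- under distinctness: end of run is the word's end or an ascent -/
lemma drun_end {x : ℕ → ℤ} {n p : ℕ} (hp : p < n)
    (hx : ∀ i j, i < n → j < n → x i = x j → i = j) :
    p + drun x n p = n ∨ x (p + drun x n p - 1) < x (p + drun x n p) := by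
  rcases (drun_spec x n (n - p) p le_rfl hp).2.2.2 with h | h
  · exact Or.inl h
  · by_cases hn : p + drun x n p = n
    · exact Or.inl hn
    · have hlt : p + drun x n p < n := lt_of_le_of_ne (drun_add_le hp) hn
      have h1 : 1 ≤ drun x n p := drun_pos hp
      -- descent at the end would mean run continues
      have hnd : ¬ x (p + drun x n p) < x (p + drun x n p - 1) := by
        intro hd
        have hge : drun x n p + 1 ≤ drun x n p := by
          apply drun_ge (drun x n p + 1) p (by omega) (by omega)
          intro i hpi hi
          rcases Nat.lt_or_ge (i+1) (p + drun x n p) with hlt' | hge'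
          · exact drun_desc hp i hpi hlt'
          · have : i + 1 = p + drun x n p := by omega
            rw [this, show i = p + drun x n p - 1 by omega]
            exact hd
        omega
      rcases h hnd with h' | h'
      · exact Or.inr h'
      · exact absurd (hx _ _ (by omega) hlt h') (by omega)

end DesarTheory
section DlenTheory

variable {x : ℕ → ℤ} {n : ℕ}

lemma dlen_set_nonempty (n : ℕ) (x : ℕ → ℤ) :
    {m | m ≤ n ∧ IsDesar m (fun i => x (n - m + i))}.Nonempty :=
  ⟨0, Nat.zero_le n, Or.inl rfl⟩

lemma dlen_set_bdd (n : ℕ) (x : ℕ → ℤ) :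
    BddAbove {m | m ≤ n ∧ IsDesar m (fun i => x (n - m + i))} :=
  ⟨n, fun _ hm => hm.1⟩

lemma dlen_le (n : ℕ) (x : ℕ → ℤ) : dlen n x ≤ n :=
  (Nat.sSup_mem (dlen_set_nonempty n x) (dlen_set_bdd n x)).1

lemma dlen_isDesar (n : ℕ) (x : ℕ → ℤ) :
    IsDesar (dlen n x) (fun i => x (n - dlen n x + i)) :=
  (Nat.sSup_mem (dlen_set_nonempty n x) (dlen_set_bdd n x)).2

lemma le_dlen {m : ℕ} (hm : m ≤ n) (hd : IsDesar m (fun i => x (n - m + i))) :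
    m ≤ dlen n x :=
  le_csSup (dlen_set_bdd n x) ⟨hm, hd⟩

/-- characterization of desarrangement suffixes via run length parity -/
lemma isDesar_suffix_iff (hx : ∀ i j, i < n → j < n → x i = x j → i = j)
    {p : ℕ} (hp : p ≤ n) :
    IsDesar (n - p) (fun i => x (p + i)) ↔ p = n ∨ Even (drun x n p) := by
  rcases Nat.eq_or_lt_of_le hp with rfl | hpn
  · rw [Nat.sub_self]
    constructor
    · intro _; exact Or.inl rfl
    · intro _; exact Or.inl rfl
  constructor
  · rintro (h0 | ⟨k, hk1, hk2, hdec, hend⟩)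
    · omega
    · right
      have hge : 2 * k ≤ drun x n p := by
        apply drun_ge (x := x) (2*k) p (by omega) (by omega)
        intro i hpi hi
        have h := hdec (i - p) (by omega)
        have e1 : p + (i - p + 1) = i + 1 := by omega
        have e2 : p + (i - p) = i := by omega
        simpa [e1, e2] using h
      have hle : drun x n p ≤ 2 * k := by
        by_contra hgt
        push_neg at hgt
        rcases hend with he | ha
        · have := drun_add_le (x := x) hpn; omega
        · have hd := drun_desc (x := x) hpn (p + 2*k - 1) (by omega) (by omega)
          have ha' : x (p + 2*k - 1) < x (p + 2*k) := by
            have e1 : p + (2*k - 1) = p + 2*k - 1 := by omega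
            simpa [e1] using ha
          rw [show p + 2*k - 1 + 1 = p + 2*k by omega] at hd
          exact absurd ha' (asymm hd)
      have : drun x n p = 2 * k := le_antisymm hle hge
      exact ⟨k, by omega⟩
  · rintro (h0 | ⟨k, hk⟩)
    · omega
    · have h1 : 1 ≤ drun x n p := drun_pos hpn
      have h2 : p + drun x n p ≤ n := drun_add_le hpn
      right
      refine ⟨k, by omega, by omega, fun i hi => ?_, ?_⟩
      · show x (p + (i + 1)) < x (p + i)
        have h := drun_desc (x := x) hpn (p + i) (by omega) (by omega)
        rw [show p + (i+1) = p + i + 1 by omega]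
        exact h
      · rcases drun_end hpn hx with he | ha
        · left; omega
        · right
          show x (p + (2*k - 1)) < x (p + 2*k)
          rw [show p + (2*k - 1) = p + drun x n p - 1 by omega,
              show p + 2*k = p + drun x n p by omega]
          exact ha

/-- the word left of the maximal desarrangement suffix is increasing -/
lemma prefix_increasing (hx : ∀ i j, i < n → j < n → x i = x j → i = j)
    {i : ℕ} (hi : i + 1 < n - dlen n x) : x i < x (i + 1) := by
  have hdle := dlen_le n x
  have hodd : ∀ p, p < n - dlen n x → ¬ Even (drun x n p) := by
    intro p hpq heven
    have hd : IsDesar (n - p) (fun j => x (p + j)) := by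
      rw [isDesar_suffix_iff hx (by omega)]
      exact Or.inr heven
    have : n - p ≤ dlen n x := by
      apply le_dlen (by omega)
      rw [show n - (n - p) = p by omega]
      exact hd
    omega
  by_contra hlt
  have hne : x (i+1) < x i := by
    rcases lt_trichotomy (x i) (x (i+1)) with h | h | h
    · exact absurd h hlt
    · exact absurd (hx i (i+1) (by omega) (by omega) h) (by omega)
    · exact h
  have hrec : drun x n i = drun x n (i + 1) + 1 := by
    rw [drun, dif_pos (show i < n by omega), if_pos ⟨by omega, hne⟩]
  have h1 := hodd i (by omega)
  have h2 := hodd (i+1) hi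
  rw [hrec] at h1
  rcases Nat.even_or_odd (drun x n (i+1)) with h | h
  · exact h2 h
  · exact h1 (by rcases h with ⟨c, hc⟩; exact ⟨c+1, by omega⟩)

/-- converse: gluing an increasing prefix with a desarrangement suffix -/
lemma dlen_eq_of (hx : ∀ i j, i < n → j < n → x i = x j → i = j)
    {q : ℕ} (hq : q ≤ n) (hinc : ∀ i, i + 1 < q → x i < x (i + 1))
    (hd : IsDesar (n - q) (fun i => x (q + i))) : dlen n x = n - q := by
  have hge : n - q ≤ dlen n x := by
    apply le_dlen (by omega)
    rw [show n - (n - q) = q by omega]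
    exact hd
  have hodd : ∀ p, p < q → ¬ Even (drun x n p) := by
    intro p hpq
    have hpn : p < n := by omega
    by_cases hp1 : p + 1 < q
    · have hasc := hinc p hp1
      have : drun x n p = 1 := by
        rw [drun, dif_pos hpn, if_neg]
        rintro ⟨-, hlt⟩
        exact absurd hasc (asymm hlt)
      rw [this]; decide
    · have hp1q : p + 1 = q := by omega
      by_cases hqn : q = n
      · have : drun x n p = 1 := by
          rw [drun, dif_pos hpn, if_neg]
          rintro ⟨hlt, -⟩
          omega
        rw [this]; decide
      · have hqn' : q < n := by omega
        have heq : Even (drun x n q) := by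
          rcases (isDesar_suffix_iff hx (le_of_lt hqn')).1 hd with h | h
          · omega
          · exact h
        by_cases hdesc : x (p+1) < x p
        · have : drun x n p = drun x n q + 1 := by
            rw [drun, dif_pos hpn, if_pos ⟨by omega, hdesc⟩, hp1q]
          rw [this]
          rcases heq with ⟨c, hc⟩
          rintro ⟨c', hc'⟩; omega
        · have : drun x n p = 1 := by
            rw [drun, dif_pos hpn, if_neg]
            rintro ⟨-, hlt⟩; exact hdesc hlt
          rw [this]; decide
  have hle : dlen n x ≤ n - q := by
    by_contra hgt
    push_neg at hgt
    set p0 := n - dlen n x with hp0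
    have hdle := dlen_le n x
    have hp0q : p0 < q := by omega
    have hd0 : IsDesar (n - p0) (fun i => x (p0 + i)) := by
      have := dlen_isDesar n x
      rw [show n - p0 = dlen n x by omega]
      exact this
    rcases (isDesar_suffix_iff hx (by omega)).1 hd0 with h | h
    · omega
    · exact hodd p0 hp0q h
  omega

end DlenTheory
section SignedWords

variable {n : ℕ}

/-- the signed value: `±(v+1)` according to the sign `ξ v` -/
def sval {n : ℕ} (ξ : Fin n → Bool) (v : Fin n) : ℤ :=
  if ξ v then -((v : ℤ) + 1) else (v : ℤ) + 1

lemma sval_natAbs {ξ : Fin n → Bool} (v : Fin n) : (sval ξ v).natAbs = (v : ℕ) + 1 := by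
  unfold sval; split <;> simp [Int.natAbs_add_of_nonneg] <;> omega

lemma sval_neg_iff {ξ : Fin n → Bool} (v : Fin n) : sval ξ v < 0 ↔ ξ v = true := by
  unfold sval; split <;> simp_all <;> omega

lemma sval_inj {ξ : Fin n → Bool} : Function.Injective (sval ξ) := by
  intro v w h
  have h1 : (sval ξ v).natAbs = (sval ξ w).natAbs := by rw [h]
  rw [sval_natAbs, sval_natAbs] at h1
  exact Fin.ext (by omega)

/-- the sign of each value of a signed permutation -/
def vsgn (w : Equiv.Perm (Fin n) × (Fin n → Bool)) : Fin n → Bool :=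
  fun v => w.2 (w.1.symm v)

lemma sword_eq_sval (w : Equiv.Perm (Fin n) × (Fin n → Bool)) {i : ℕ} (h : i < n) :
    sword n w i = sval (vsgn w) (w.1 ⟨i, h⟩) := by
  unfold sword sval vsgn
  rw [dif_pos h, Equiv.symm_apply_apply]

lemma sword_injOn (w : Equiv.Perm (Fin n) × (Fin n → Bool)) :
    ∀ i j, i < n → j < n → sword n w i = sword n w j → i = j := by
  intro i j hi hj h
  rw [sword_eq_sval w hi, sword_eq_sval w hj] at h
  have := w.1.injective (sval_inj h)
  simpa [Fin.ext_iff] using this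

/-- the rank of the `i`-th letter among the first `d` letters -/
def rankf (d : ℕ) (y : ℕ → ℤ) (i : ℕ) : ℕ :=
  ((Finset.range d).filter fun j => y j < y i).card

lemma rankf_lt {d : ℕ} {y : ℕ → ℤ} {i : ℕ} (hi : i < d) : rankf d y i < d := by
  have h1 : ((Finset.range d).filter fun j => y j < y i) ⊂ Finset.range d := by
    rw [Finset.ssubset_iff_of_subset (Finset.filter_subset _ _)]
    exact ⟨i, Finset.mem_range.2 hi, by simp⟩
  have := Finset.card_lt_card h1
  simpa [rankf] using this

lemma rankf_lt_rankf_of {d : ℕ} {y : ℕ → ℤ} {i j : ℕ} (hi : i < d) (hj : j < d)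
    (h : y i < y j) : rankf d y i < rankf d y j := by
  apply Finset.card_lt_card
  rw [Finset.ssubset_iff_of_subset]
  · exact ⟨i, Finset.mem_filter.2 ⟨Finset.mem_range.2 hi, h⟩, by simp⟩
  · intro a ha
    simp only [Finset.mem_filter] at ha ⊢
    exact ⟨ha.1, lt_trans ha.2 h⟩

lemma rankf_lt_rankf_iff {d : ℕ} {y : ℕ → ℤ}
    (hinj : ∀ i j, i < d → j < d → y i = y j → i = j) {i j : ℕ} (hi : i < d) (hj : j < d) :
    rankf d y i < rankf d y j ↔ y i < y j := by
  constructor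
  · intro h
    rcases lt_trichotomy (y i) (y j) with h' | h' | h'
    · exact h'
    · rw [hinj i j hi hj h'] at h; omega
    · exact absurd (rankf_lt_rankf_of hj hi h') (by omega)
  · exact rankf_lt_rankf_of hi hj

lemma card_filter_lt_fin' {d : ℕ} (k : Fin d) :
    ((univ : Finset (Fin d)).filter fun j : Fin d => j < k).card = (k : ℕ) := by
  have : ((univ : Finset (Fin d)).filter fun j : Fin d => j < k) = Finset.Iio k := by
    ext j; simp
  rw [this, Fin.card_Iio]

lemma count_lt_orderEmbOfFin (s : Finset ℤ) {d : ℕ} (h : s.card = d) (k : Fin d) :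
    (s.filter fun z => z < s.orderEmbOfFin h k).card = (k : ℕ) := by
  have he : (s.filter fun z => z < s.orderEmbOfFin h k)
      = ((univ : Finset (Fin d)).filter fun j : Fin d => j < k).image (s.orderEmbOfFin h) := by
    ext z
    simp only [Finset.mem_filter, Finset.mem_image, Finset.mem_univ, true_and]
    constructor
    · rintro ⟨hz, hlt⟩
      have : z ∈ Set.range (s.orderEmbOfFin h) := by
        rw [Finset.range_orderEmbOfFin]; exact hz
      rcases this with ⟨j, rfl⟩
      exact ⟨j, (OrderEmbedding.lt_iff_lt _).1 hlt, rfl⟩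
    · rintro ⟨j, hjk, rfl⟩
      exact ⟨Finset.orderEmbOfFin_mem s h j, (OrderEmbedding.lt_iff_lt _).2 hjk⟩
  rw [he, Finset.card_image_of_injective _ (s.orderEmbOfFin h).injective,
    card_filter_lt_fin']

lemma image_range_eq (s : Finset ℤ) {d : ℕ} (h : s.card = d) (y : ℕ → ℤ)
    (him : ∀ i, i < d → y i ∈ s)
    (hinj : ∀ i j, i < d → j < d → y i = y j → i = j) :
    (Finset.range d).image y = s := by
  apply Finset.eq_of_subset_of_card_le
  · intro z hz
    rcases Finset.mem_image.1 hz with ⟨i, hi, rfl⟩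
    exact him i (Finset.mem_range.1 hi)
  · rw [Finset.card_image_of_injOn, Finset.card_range, h]
    intro i hi j hj hy
    exact hinj i j (Finset.mem_range.1 hi) (Finset.mem_range.1 hj) hy

lemma rankf_eq_count (s : Finset ℤ) {d : ℕ} (h : s.card = d) (y : ℕ → ℤ)
    (him : ∀ i, i < d → y i ∈ s)
    (hinj : ∀ i j, i < d → j < d → y i = y j → i = j)
    {i : ℕ} (hi : i < d) :
    rankf d y i = (s.filter fun z => z < y i).card := by
  unfold rankf
  apply Finset.card_bij (fun j _ => y j)
  · intro j hj
    simp only [Finset.mem_filter, Finset.mem_range] at hj ⊢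
    exact ⟨him j hj.1, hj.2⟩
  · intro a ha b hb hab
    simp only [Finset.mem_filter, Finset.mem_range] at ha hb
    exact hinj a b ha.1 hb.1 hab
  · intro z hz
    simp only [Finset.mem_filter] at hz
    have : z ∈ (Finset.range d).image y := by
      rw [image_range_eq s h y him hinj]; exact hz.1
    rcases Finset.mem_image.1 this with ⟨j, hj, rfl⟩
    exact ⟨j, Finset.mem_filter.2 ⟨hj, hz.2⟩, rfl⟩

/-- unranking inverts ranking -/
lemma orderEmbOfFin_rankf (s : Finset ℤ) {d : ℕ} (h : s.card = d) (y : ℕ → ℤ)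
    (him : ∀ i, i < d → y i ∈ s)
    (hinj : ∀ i j, i < d → j < d → y i = y j → i = j)
    {i : ℕ} (hi : i < d) (hr : rankf d y i < d) :
    s.orderEmbOfFin h ⟨rankf d y i, hr⟩ = y i := by
  have hyi : y i ∈ Set.range (s.orderEmbOfFin h) := by
    rw [Finset.range_orderEmbOfFin]; exact him i hi
  rcases hyi with ⟨k, hk⟩
  have : rankf d y i = (k : ℕ) := by
    rw [rankf_eq_count s h y him hinj hi, ← hk, count_lt_orderEmbOfFin]
  rw [show (⟨rankf d y i, hr⟩ : Fin d) = k from Fin.ext this, hk]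

end SignedWords
section Decomp

variable {n : ℕ}

/-- length of the prefix `w⁻ w⁺` in the pixed factorization -/
def qlen (n : ℕ) (w : Equiv.Perm (Fin n) × (Fin n → Bool)) : ℕ := n - dlen n (sword n w)

/-- the set of (absolute) values in the prefix of the pixed factorization -/
def pset (n : ℕ) (w : Equiv.Perm (Fin n) × (Fin n → Bool)) : Finset (Fin n) :=
  (Finset.univ.filter fun i : Fin n => (i : ℕ) < qlen n w).image w.1

lemma qlen_le (w : Equiv.Perm (Fin n) × (Fin n → Bool)) : qlen n w ≤ n :=
  Nat.sub_le _ _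

lemma card_pset (w : Equiv.Perm (Fin n) × (Fin n → Bool)) :
    (pset n w).card = qlen n w := by
  unfold pset
  rw [Finset.card_image_of_injective _ w.1.injective,
    card_filter_lt_fin n (qlen n w) (qlen_le w)]

lemma d_eq (w : Equiv.Perm (Fin n) × (Fin n → Bool)) :
    n - (pset n w).card = dlen n (sword n w) := by
  rw [card_pset]
  have := dlen_le n (sword n w)
  unfold qlen
  omega

lemma mem_pset {w : Equiv.Perm (Fin n) × (Fin n → Bool)} {v : Fin n} :
    v ∈ pset n w ↔ ((w.1.symm v : Fin n) : ℕ) < qlen n w := by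
  unfold pset
  simp only [Finset.mem_image, Finset.mem_filter, Finset.mem_univ, true_and]
  constructor
  · rintro ⟨i, hi, rfl⟩
    rwa [Equiv.symm_apply_apply]
  · intro h
    exact ⟨w.1.symm v, h, Equiv.apply_symm_apply _ _⟩

/-- the suffix word `w^d` -/
def ysuf (n : ℕ) (w : Equiv.Perm (Fin n) × (Fin n → Bool)) : ℕ → ℤ :=
  fun i => sword n w (qlen n w + i)

lemma ysuf_inj (w : Equiv.Perm (Fin n) × (Fin n → Bool)) :
    ∀ i j, i < n - (pset n w).card → j < n - (pset n w).card →
      ysuf n w i = ysuf n w j → i = j := by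
  intro i j hi hj h
  rw [d_eq] at hi hj
  have hq : qlen n w + dlen n (sword n w) = n := by
    unfold qlen; have := dlen_le n (sword n w); omega
  have := sword_injOn w (qlen n w + i) (qlen n w + j) (by omega) (by omega) h
  omega

/-- the pattern (rank word) of the suffix -/
def fperm (n : ℕ) (w : Equiv.Perm (Fin n) × (Fin n → Bool)) :
    Equiv.Perm (Fin (n - (pset n w).card)) :=
  Equiv.ofBijective
    (fun i => ⟨rankf (n - (pset n w).card) (ysuf n w) i, rankf_lt i.2⟩)
    (Finite.injective_iff_bijective.1 (by
      intro i j h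
      simp only [Fin.mk.injEq] at h
      apply Fin.ext
      rcases lt_trichotomy (ysuf n w i) (ysuf n w j) with h' | h' | h'
      · exact absurd (rankf_lt_rankf_of i.2 j.2 h') (by omega)
      · exact ysuf_inj w i j i.2 j.2 h'
      · exact absurd (rankf_lt_rankf_of j.2 i.2 h') (by omega)))

lemma fperm_apply (w : Equiv.Perm (Fin n) × (Fin n → Bool))
    (i : Fin (n - (pset n w).card)) :
    (fperm n w i : ℕ) = rankf (n - (pset n w).card) (ysuf n w) i := rfl

lemma fperm_desar (w : Equiv.Perm (Fin n) × (Fin n → Bool)) :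
    IsDesar (n - (pset n w).card) (pword (n - (pset n w).card) (fperm n w)) := by
  have hdes : IsDesar (n - (pset n w).card) (ysuf n w) := by
    have h := dlen_isDesar n (sword n w)
    rw [d_eq w]
    exact h
  have hcmp : ∀ i j, i < n - (pset n w).card → j < n - (pset n w).card →
      (ysuf n w i < ysuf n w j ↔ pword (n - (pset n w).card) (fperm n w) i < pword (n - (pset n w).card) (fperm n w) j) := by
    intro i j hi hj
    unfold pword
    rw [dif_pos hi, dif_pos hj]
    have h1 : (fperm n w ⟨i, hi⟩ : ℕ) = rankf (n - (pset n w).card) (ysuf n w) i := rfl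
    have h2 : (fperm n w ⟨j, hj⟩ : ℕ) = rankf (n - (pset n w).card) (ysuf n w) j := rfl
    rw [← rankf_lt_rankf_iff (ysuf_inj w) hi hj]
    rw [← h1, ← h2]
    constructor
    · intro h; exact_mod_cast Int.add_lt_add_right (by exact_mod_cast h : ((fperm n w ⟨i, hi⟩ : ℕ) : ℤ) < ((fperm n w ⟨j, hj⟩ : ℕ) : ℤ)) 1
    · intro h
      have : ((fperm n w ⟨i, hi⟩ : ℕ) : ℤ) < ((fperm n w ⟨j, hj⟩ : ℕ) : ℤ) := by omega
      exact_mod_cast this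
  exact (isDesar_congr hcmp).1 hdes

/-- the decomposition target: prefix value set, value signs, suffix pattern -/
abbrev DTarget (n : ℕ) : Type :=
  Σ S : Finset (Fin n),
    (Fin n → Bool) × {π : Equiv.Perm (Fin (n - S.card)) //
      IsDesar (n - S.card) (pword (n - S.card) π)}

/-- the forward decomposition map -/
def fmap (n : ℕ) (w : Equiv.Perm (Fin n) × (Fin n → Bool)) : DTarget n :=
  ⟨pset n w, (vsgn w, ⟨fperm n w, fperm_desar w⟩)⟩

end Decomp
section Gmap

variable {n : ℕ}

lemma card_image_sval (ξ : Fin n → Bool) (K : Finset (Fin n)) :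
    (K.image (sval ξ)).card = K.card :=
  Finset.card_image_of_injective _ sval_inj

lemma card_compl' (S : Finset (Fin n)) : (Sᶜ : Finset (Fin n)).card = n - S.card := by
  rw [Finset.card_compl, Fintype.card_fin]

lemma card_image_sval_compl (ξ : Fin n → Bool) (S : Finset (Fin n)) :
    ((Sᶜ : Finset (Fin n)).image (sval ξ)).card = n - S.card := by
  rw [card_image_sval, card_compl']

/-- the word of the signed permutation reconstructed from decomposition data -/
def gword (n : ℕ) (S : Finset (Fin n)) (ξ : Fin n → Bool)
    (π : Equiv.Perm (Fin (n - S.card))) : ℕ → ℤ :=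
  fun i =>
    if h1 : i < S.card then (S.image (sval ξ)).orderEmbOfFin (card_image_sval ξ S) ⟨i, h1⟩
    else if h2 : i < n then
      ((Sᶜ : Finset (Fin n)).image (sval ξ)).orderEmbOfFin (card_image_sval_compl ξ S)
        (π ⟨i - S.card, by omega⟩)
    else 0

variable {S : Finset (Fin n)} {ξ : Fin n → Bool} {π : Equiv.Perm (Fin (n - S.card))}

lemma gword_prefix {i : ℕ} (h : i < S.card) :
    gword n S ξ π i = (S.image (sval ξ)).orderEmbOfFin (card_image_sval ξ S) ⟨i, h⟩ := by
  unfold gword; rw [dif_pos h]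

lemma gword_suffix {i : ℕ} (hi : i < n - S.card) :
    gword n S ξ π (S.card + i) =
      ((Sᶜ : Finset (Fin n)).image (sval ξ)).orderEmbOfFin (card_image_sval_compl ξ S)
        (π ⟨i, hi⟩) := by
  unfold gword
  rw [dif_neg (by omega), dif_pos (by omega)]
  congr 2
  exact Fin.ext (by simp)

/-- every letter of `gword` is a signed value, in/out of `S` according to position -/
lemma gword_mem {i : ℕ} (hi : i < n) :
    ∃ v : Fin n, sval ξ v = gword n S ξ π i ∧ (v ∈ S ↔ i < S.card) := by
  by_cases h1 : i < S.card
  · rw [gword_prefix h1]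
    have := Finset.orderEmbOfFin_mem (S.image (sval ξ)) (card_image_sval ξ S) ⟨i, h1⟩
    rcases Finset.mem_image.1 this with ⟨v, hv, hveq⟩
    exact ⟨v, hveq, iff_of_true hv h1⟩
  · have hd : i - S.card < n - S.card := by omega
    have hie : S.card + (i - S.card) = i := by omega
    rw [← hie, gword_suffix hd]
    have := Finset.orderEmbOfFin_mem ((Sᶜ : Finset (Fin n)).image (sval ξ))
      (card_image_sval_compl ξ S) (π ⟨i - S.card, hd⟩)
    rcases Finset.mem_image.1 this with ⟨v, hv, hveq⟩
    rw [Finset.mem_compl] at hv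
    exact ⟨v, hveq, iff_of_false hv (by omega)⟩

lemma gword_injOn : ∀ i j, i < n → j < n →
    gword n S ξ π i = gword n S ξ π j → i = j := by
  intro i j hi hj h
  obtain ⟨v, hv, hvS⟩ := gword_mem (π := π) hi
  obtain ⟨v', hv', hvS'⟩ := gword_mem (π := π) hj
  have hvv : v = v' := sval_inj (by rw [hv, hv', h])
  subst hvv
  by_cases h1 : i < S.card
  · have h2 : j < S.card := hvS'.1 (hvS.2 h1)
    rw [gword_prefix h1, gword_prefix h2] at h
    have := ((S.image (sval ξ)).orderEmbOfFin (card_image_sval ξ S)).injective h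
    simpa [Fin.ext_iff] using this
  · have h2 : ¬ j < S.card := fun hj2 => h1 (hvS.1 (hvS'.2 hj2))
    have hd1 : i - S.card < n - S.card := by omega
    have hd2 : j - S.card < n - S.card := by omega
    rw [show i = S.card + (i - S.card) by omega, gword_suffix hd1] at h
    rw [show j = S.card + (j - S.card) by omega, gword_suffix hd2] at h
    have := (((Sᶜ : Finset (Fin n)).image (sval ξ)).orderEmbOfFin
      (card_image_sval_compl ξ S)).injective h
    have := π.injective this
    simp only [Fin.mk.injEq] at this
    omega

lemma gword_natAbs_lt {i : ℕ} (hi : i < n) :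
    (gword n S ξ π i).natAbs - 1 < n := by
  obtain ⟨v, hv, -⟩ := gword_mem (π := π) hi
  rw [← hv, sval_natAbs]
  simpa using v.2

/-- the permutation underlying the reconstructed signed permutation -/
def gperm (n : ℕ) (S : Finset (Fin n)) (ξ : Fin n → Bool)
    (π : Equiv.Perm (Fin (n - S.card))) : Equiv.Perm (Fin n) :=
  Equiv.ofBijective
    (fun i : Fin n => ⟨(gword n S ξ π i).natAbs - 1, gword_natAbs_lt i.2⟩)
    (Finite.injective_iff_bijective.1 (by
      intro i j h
      simp only [Fin.mk.injEq] at h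
      obtain ⟨v, hv, -⟩ := gword_mem (S := S) (ξ := ξ) (π := π) i.2
      obtain ⟨v', hv', -⟩ := gword_mem (S := S) (ξ := ξ) (π := π) j.2
      rw [← hv, ← hv', sval_natAbs, sval_natAbs] at h
      have hvv : v = v' := Fin.ext (by omega)
      subst hvv
      exact Fin.ext (gword_injOn i j i.2 j.2 (by rw [← hv, ← hv']))))

lemma gperm_apply (i : Fin n) :
    sval ξ (gperm n S ξ π i) = gword n S ξ π i ∧ (gperm n S ξ π i ∈ S ↔ (i : ℕ) < S.card) := by
  obtain ⟨v, hv, hvS⟩ := gword_mem (S := S) (ξ := ξ) (π := π) i.2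
  have : gperm n S ξ π i = v := by
    apply Fin.ext
    show (gword n S ξ π i).natAbs - 1 = (v : ℕ)
    rw [← hv, sval_natAbs]
    omega
  rw [this, hv]
  exact ⟨rfl, hvS⟩

/-- the reconstructed signed permutation -/
def gmap (n : ℕ) (t : DTarget n) : Equiv.Perm (Fin n) × (Fin n → Bool) :=
  (gperm n t.1 t.2.1 t.2.2.1, fun i => decide (gword n t.1 t.2.1 t.2.2.1 i < 0))

lemma sword_gmap (t : DTarget n) {i : ℕ} (hi : i < n) :
    sword n (gmap n t) i = gword n t.1 t.2.1 t.2.2.1 i := by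
  obtain ⟨S, ξ, π, hπ⟩ := t
  obtain ⟨hv, -⟩ := gperm_apply (S := S) (ξ := ξ) (π := π) ⟨i, hi⟩
  have hg : ((gmap n ⟨S, (ξ, ⟨π, hπ⟩)⟩).2 ⟨i, hi⟩) = decide (gword n S ξ π i < 0) := rfl
  have hperm : ((gmap n ⟨S, (ξ, ⟨π, hπ⟩)⟩).1 ⟨i, hi⟩) = gperm n S ξ π ⟨i, hi⟩ := rfl
  unfold sword
  rw [dif_pos hi]
  by_cases hneg : gword n S ξ π i < 0
  · have ht : ((gmap n ⟨S, (ξ, ⟨π, hπ⟩)⟩).2 ⟨i, hi⟩) = true := by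
      rw [hg]; exact decide_eq_true hneg
    simp only [ht, if_true]
    have hξ : ξ (gperm n S ξ π ⟨i, hi⟩) = true :=
      (sval_neg_iff _).1 (by rw [hv]; exact hneg)
    rw [hperm, ← hv]
    unfold sval
    rw [if_pos hξ]
  · have ht : ((gmap n ⟨S, (ξ, ⟨π, hπ⟩)⟩).2 ⟨i, hi⟩) = false := by
      rw [hg]; exact decide_eq_false hneg
    simp only [ht, Bool.false_eq_true, if_false]
    have hξ : ξ (gperm n S ξ π ⟨i, hi⟩) = false := by
      have := (sval_neg_iff (ξ := ξ) (gperm n S ξ π ⟨i, hi⟩))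
      rw [hv] at this
      rcases Bool.eq_false_or_eq_true (ξ (gperm n S ξ π ⟨i, hi⟩)) with h | h
      · exact absurd (this.2 h) hneg
      · exact h
    rw [hperm, ← hv]
    unfold sval
    rw [if_neg (by simp [hξ])]

end Gmap
section Bijection

variable {n : ℕ}

lemma incr_trans {x : ℕ → ℤ} {q : ℕ} (hinc : ∀ i, i + 1 < q → x i < x (i + 1)) :
    ∀ a b, a < b → b < q → x a < x b := by
  intro a b hab hbq
  induction b with
  | zero => omega
  | succ b ih =>
    rcases Nat.lt_or_ge a b with h | h
    · exact lt_trans (ih h (by omega)) (hinc b (by omega))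
    · have : a = b := by omega
      subst this
      exact hinc a (by omega)

/-- reconstruction: the word of `w` is the word built from its decomposition data -/
lemma sword_eq_gword_fmap (w : Equiv.Perm (Fin n) × (Fin n → Bool)) {i : ℕ} (hi : i < n) :
    sword n w i = gword n (pset n w) (vsgn w) (fperm n w) i := by
  have hcq : (pset n w).card = qlen n w := card_pset w
  have hqn : qlen n w ≤ n := qlen_le w
  by_cases h1 : i < (pset n w).card
  · rw [gword_prefix h1]
    have hf : (fun j : Fin ((pset n w).card) => sword n w (j : ℕ))
        = ((pset n w).image (sval (vsgn w))).orderEmbOfFin (card_image_sval (vsgn w) (pset n w)) := by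
      apply Finset.orderEmbOfFin_unique
      · intro j
        have hjn : (j : ℕ) < n := by omega
        rw [sword_eq_sval w hjn]
        apply Finset.mem_image_of_mem
        rw [mem_pset, Equiv.symm_apply_apply]
        show (j : ℕ) < qlen n w
        omega
      · intro a b hab
        have hinc : ∀ k, k + 1 < qlen n w → sword n w k < sword n w (k + 1) := by
          intro k hk
          exact prefix_increasing (sword_injOn w) hk
        exact incr_trans hinc a b hab (by omega)
    have := congrFun hf ⟨i, h1⟩
    exact this
  · unfold gword
    rw [dif_neg h1, dif_pos hi]
    have hd : i - (pset n w).card < n - (pset n w).card := by omega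
    have hfp : fperm n w ⟨i - (pset n w).card, by omega⟩
        = ⟨rankf (n - (pset n w).card) (ysuf n w) (i - (pset n w).card),
            rankf_lt hd⟩ := rfl
    rw [hfp]
    have hres := orderEmbOfFin_rankf (((pset n w)ᶜ : Finset (Fin n)).image (sval (vsgn w)))
      (card_image_sval_compl (vsgn w) (pset n w)) (ysuf n w) ?_ (ysuf_inj w) hd (rankf_lt hd)
    · rw [hres]
      unfold ysuf
      congr 1
      omega
    · intro j hj
      have hjn : qlen n w + j < n := by omega
      unfold ysuf
      rw [sword_eq_sval w hjn]
      apply Finset.mem_image_of_mem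
      rw [Finset.mem_compl, mem_pset, Equiv.symm_apply_apply]
      show ¬ (qlen n w + j) < qlen n w
      omega

lemma sword_neg_iff (w : Equiv.Perm (Fin n) × (Fin n → Bool)) {i : ℕ} (hi : i < n) :
    sword n w i < 0 ↔ w.2 ⟨i, hi⟩ = true := by
  rw [sword_eq_sval w hi, sval_neg_iff]
  unfold vsgn
  rw [Equiv.symm_apply_apply]

lemma sword_determines {w w' : Equiv.Perm (Fin n) × (Fin n → Bool)}
    (h : ∀ i, i < n → sword n w i = sword n w' i) : w = w' := by
  have hperm : w.1 = w'.1 := by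
    apply Equiv.ext
    intro i
    have hh := h i i.2
    rw [sword_eq_sval w i.2, sword_eq_sval w' i.2] at hh
    have h2 := congrArg Int.natAbs hh
    rw [sval_natAbs, sval_natAbs] at h2
    apply Fin.ext
    show ((w.1 ⟨(i : ℕ), i.2⟩ : Fin n) : ℕ) = ((w'.1 ⟨(i : ℕ), i.2⟩ : Fin n) : ℕ)
    omega
  have hsgn : w.2 = w'.2 := by
    funext i
    have h1 := sword_neg_iff w i.2
    have h2 := sword_neg_iff w' i.2
    rw [h i i.2] at h1
    rcases Bool.eq_false_or_eq_true (w.2 i) with hb | hb <;>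
      rcases Bool.eq_false_or_eq_true (w'.2 i) with hb' | hb'
    · rw [hb, hb']
    · exfalso
      rw [hb] at h1; rw [hb'] at h2
      simp at h1 h2
      omega
    · exfalso
      rw [hb] at h1; rw [hb'] at h2
      simp at h1 h2
      omega
    · rw [hb, hb']
  exact Prod.ext hperm hsgn

lemma gmap_fmap (w : Equiv.Perm (Fin n) × (Fin n → Bool)) : gmap n (fmap n w) = w := by
  apply sword_determines
  intro i hi
  rw [sword_gmap (fmap n w) hi]
  exact (sword_eq_gword_fmap w hi).symm

lemma dtarget_ext (t u : DTarget n) (h1 : t.1 = u.1) (h2 : t.2.1 = u.2.1)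
    (h3 : ∀ i (hi : i < n - t.1.card) (hi' : i < n - u.1.card),
        ((t.2.2.1 ⟨i, hi⟩ : Fin (n - t.1.card)) : ℕ)
          = ((u.2.2.1 ⟨i, hi'⟩ : Fin (n - u.1.card)) : ℕ)) : t = u := by
  obtain ⟨S, ξ, π, hπ⟩ := t
  obtain ⟨S', ξ', π', hπ'⟩ := u
  simp only at h1 h2 h3
  subst h1
  subst h2
  have : π = π' := by
    apply Equiv.ext
    intro i
    exact Fin.ext (h3 i i.2 i.2)
  subst this
  rfl

lemma fmap_gmap (t : DTarget n) : fmap n (gmap n t) = t := by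
  obtain ⟨S, ξ, π, hπ⟩ := t
  have hSn : S.card ≤ n := by
    have := Finset.card_le_univ S
    simpa using this
  set w := gmap n ⟨S, (ξ, ⟨π, hπ⟩)⟩ with hw
  have hword : ∀ i, i < n → sword n w i = gword n S ξ π i :=
    fun i hi => sword_gmap ⟨S, (ξ, ⟨π, hπ⟩)⟩ hi
  -- the embedded alphabets
  have hdlen : dlen n (sword n w) = n - S.card := by
    apply dlen_eq_of (sword_injOn w) hSn
    · intro i h1
      rw [hword i (by omega), hword (i+1) (by omega),
        gword_prefix (by omega : i < S.card), gword_prefix (h1 : i + 1 < S.card)]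
      have : (⟨i, by omega⟩ : Fin S.card) < ⟨i+1, h1⟩ := by
        simp [Fin.mk_lt_mk]
      exact (OrderEmbedding.lt_iff_lt _).2 this
    · have hcmp : ∀ i j, i < n - S.card → j < n - S.card →
          (pword (n - S.card) π i < pword (n - S.card) π j ↔
            sword n w (S.card + i) < sword n w (S.card + j)) := by
        intro i j hi hj
        rw [hword _ (by omega), hword _ (by omega), gword_suffix hi, gword_suffix hj]
        unfold pword
        rw [dif_pos hi, dif_pos hj]
        rw [OrderEmbedding.lt_iff_lt]
        constructor
        · intro h
          have : (π ⟨i, hi⟩ : ℕ) < (π ⟨j, hj⟩ : ℕ) := by omega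
          exact this
        · intro h
          have : ((π ⟨i, hi⟩ : ℕ) : ℤ) < ((π ⟨j, hj⟩ : ℕ) : ℤ) := by exact_mod_cast h
          omega
      exact (isDesar_congr hcmp).1 hπ
  have hq : qlen n w = S.card := by
    unfold qlen
    omega
  have hpset : pset n w = S := by
    apply Finset.eq_of_subset_of_card_le
    · intro v hv
      rw [mem_pset] at hv
      set i := w.1.symm v with hi
      have hvi : w.1 i = v := Equiv.apply_symm_apply _ _
      have := (gperm_apply (S := S) (ξ := ξ) (π := π) i).2
      rw [hq] at hv
      rw [← hvi]
      exact this.2 hv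
    · rw [card_pset w, hq]
  have hsgn : vsgn w = ξ := by
    funext v
    unfold vsgn
    set i := w.1.symm v with hi
    have hvi : w.1 i = v := Equiv.apply_symm_apply _ _
    have hg := (gperm_apply (S := S) (ξ := ξ) (π := π) i).1
    have hw2 : w.2 i = decide (gword n S ξ π (i : ℕ) < 0) := rfl
    have hgv : gword n S ξ π (i : ℕ) = sval ξ v := by rw [← hg, ← hvi]; rfl
    rw [hw2, hgv]
    rcases Bool.eq_false_or_eq_true (ξ v) with hb | hb
    · rw [hb]
      apply decide_eq_true
      rw [sval_neg_iff]
      exact hb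
    · rw [hb]
      apply decide_eq_false
      rw [sval_neg_iff]
      simp [hb]
  -- the suffix letters of w
  have hys : ∀ j (hj : j < n - S.card), ysuf n w j =
      ((Sᶜ : Finset (Fin n)).image (sval ξ)).orderEmbOfFin (card_image_sval_compl ξ S)
        (π ⟨j, hj⟩) := by
    intro j hj
    unfold ysuf
    rw [hq]
    rw [hword _ (by omega)]
    exact gword_suffix hj
  apply dtarget_ext
  · exact hpset
  · exact hsgn
  · intro i hi hi'
    show rankf (n - (pset n w).card) (ysuf n w) i = ((π ⟨i, hi'⟩ : Fin (n - S.card)) : ℕ)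
    have hcard : (pset n w).card = S.card := by rw [hpset]
    rw [hcard]
    unfold rankf
    rw [← card_filter_lt_fin' (π ⟨i, hi'⟩)]
    apply Finset.card_bij (fun j hj => π ⟨j, by
      have := Finset.mem_filter.1 hj
      exact Finset.mem_range.1 (this.1)⟩)
    · intro j hj
      have hjm := Finset.mem_filter.1 hj
      have hjd : j < n - S.card := Finset.mem_range.1 hjm.1
      have hlt := hjm.2
      rw [hys j hjd, hys i hi'] at hlt
      rw [OrderEmbedding.lt_iff_lt] at hlt
      simp only [Finset.mem_filter, Finset.mem_univ, true_and]
      exact hlt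
    · intro a ha b hb hab
      have had : a < n - S.card := Finset.mem_range.1 (Finset.mem_filter.1 ha).1
      have hbd : b < n - S.card := Finset.mem_range.1 (Finset.mem_filter.1 hb).1
      have := π.injective hab
      simp only [Fin.mk.injEq] at this
      exact this
    · intro k hk
      have hklt : k < π ⟨i, hi'⟩ := (Finset.mem_filter.1 hk).2
      refine ⟨(π.symm k : ℕ), ?_, ?_⟩
      · have hjd : ((π.symm k : Fin (n - S.card)) : ℕ) < n - S.card := (π.symm k).2
        apply Finset.mem_filter.2
        refine ⟨Finset.mem_range.2 hjd, ?_⟩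
        rw [hys _ hjd, hys i hi']
        rw [OrderEmbedding.lt_iff_lt]
        have : π ⟨(π.symm k : ℕ), hjd⟩ = k := by
          have : (⟨(π.symm k : ℕ), hjd⟩ : Fin (n - S.card)) = π.symm k := Fin.ext rfl
          rw [this, Equiv.apply_symm_apply]
        rw [this]
        exact hklt
      · have : (⟨(π.symm k : ℕ), (π.symm k).2⟩ : Fin (n - S.card)) = π.symm k := Fin.ext rfl
        rw [this, Equiv.apply_symm_apply]

end Bijection
section Stats

variable {n : ℕ}

lemma card_range_filter (n : ℕ) (p : ℕ → Prop) [DecidablePred p] :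
    ((Finset.range n).filter p).card
      = ((univ : Finset (Fin n)).filter fun i : Fin n => p (i : ℕ)).card := by
  apply Finset.card_bij
    (fun i hi => (⟨i, Finset.mem_range.1 (Finset.mem_filter.1 hi).1⟩ : Fin n))
  · intro a ha
    exact Finset.mem_filter.2 ⟨Finset.mem_univ _, (Finset.mem_filter.1 ha).2⟩
  · intro a ha b hb hab
    simpa [Fin.ext_iff] using hab
  · intro b hb
    exact ⟨(b : ℕ), Finset.mem_filter.2
      ⟨Finset.mem_range.2 b.2, (Finset.mem_filter.1 hb).2⟩, Fin.ext rfl⟩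

lemma mem_pset_apply (w : Equiv.Perm (Fin n) × (Fin n → Bool)) (i : Fin n) :
    w.1 i ∈ pset n w ↔ (i : ℕ) < qlen n w := by
  rw [mem_pset, Equiv.symm_apply_apply]

lemma vsgn_apply (w : Equiv.Perm (Fin n) × (Fin n → Bool)) (i : Fin n) :
    vsgn w (w.1 i) = w.2 i := by
  unfold vsgn
  rw [Equiv.symm_apply_apply]

lemma sword_pos_iff (w : Equiv.Perm (Fin n) × (Fin n → Bool)) {i : ℕ} (hi : i < n) :
    0 < sword n w i ↔ w.2 ⟨i, hi⟩ = false := by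
  rw [sword_eq_sval w hi]
  unfold sval
  rw [vsgn_apply w ⟨i, hi⟩]
  rcases Bool.eq_false_or_eq_true (w.2 ⟨i, hi⟩) with hb | hb
  · rw [hb, if_pos rfl]
    constructor
    · intro h
      exfalso
      have : (0:ℤ) ≤ ((w.1 ⟨i,hi⟩ : ℕ) : ℤ) := Int.ofNat_nonneg _
      omega
    · intro h
      exact absurd h (by simp)
  · rw [hb, if_neg (by simp)]
    constructor
    · intro _; rfl
    · intro _
      have : (0:ℤ) ≤ ((w.1 ⟨i,hi⟩ : ℕ) : ℤ) := Int.ofNat_nonneg _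
      omega

lemma negStat_eq (w : Equiv.Perm (Fin n) × (Fin n → Bool)) :
    negStat n (sword n w)
      = ((univ : Finset (Fin n)).filter fun v : Fin n => vsgn w v = true).card := by
  unfold negStat
  apply Finset.card_bij (fun (i : ℕ) hi => w.1 ⟨i, by
    have := Finset.mem_range.1 (Finset.mem_filter.1 hi).1
    omega⟩)
  · intro i hi
    have hir := Finset.mem_range.1 (Finset.mem_filter.1 hi).1
    have hneg := (Finset.mem_filter.1 hi).2
    apply Finset.mem_filter.2
    refine ⟨Finset.mem_univ _, ?_⟩
    rw [vsgn_apply]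
    rw [sword_neg_iff w (by omega : i < n)] at hneg
    exact hneg
  · intro a ha b hb hab
    have := w.1.injective hab
    simpa [Fin.ext_iff] using this
  · intro v hv
    have hvs := (Finset.mem_filter.1 hv).2
    refine ⟨(w.1.symm v : ℕ), ?_, ?_⟩
    · apply Finset.mem_filter.2
      refine ⟨Finset.mem_range.2 (w.1.symm v).2, ?_⟩
      rw [sword_neg_iff w (w.1.symm v).2]
      have h2 : vsgn w (w.1 (w.1.symm v)) = w.2 (w.1.symm v) := vsgn_apply w _
      rw [Equiv.apply_symm_apply] at h2
      rw [show (⟨((w.1.symm v : Fin n) : ℕ), (w.1.symm v).2⟩ : Fin n) = w.1.symm v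
        from Fin.ext rfl]
      rw [← h2]
      exact hvs
    · rw [show (⟨((w.1.symm v : Fin n) : ℕ), _⟩ : Fin n) = w.1.symm v from Fin.ext rfl]
      exact Equiv.apply_symm_apply _ _

lemma pixMinus_eq (w : Equiv.Perm (Fin n) × (Fin n → Bool)) :
    pixMinus n (sword n w)
      = ((pset n w).filter fun v : Fin n => vsgn w v = true).card := by
  unfold pixMinus
  have hqd : n - dlen n (sword n w) = qlen n w := rfl
  rw [hqd]
  have hq := qlen_le w
  apply Finset.card_bij (fun (i : ℕ) hi => w.1 ⟨i, by
    have := Finset.mem_range.1 (Finset.mem_filter.1 hi).1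
    omega⟩)
  · intro i hi
    have hir := Finset.mem_range.1 (Finset.mem_filter.1 hi).1
    have hneg := (Finset.mem_filter.1 hi).2
    apply Finset.mem_filter.2
    constructor
    · rw [mem_pset_apply]
      exact hir
    · rw [vsgn_apply]
      rw [sword_neg_iff w (by omega : i < n)] at hneg
      simpa using hneg
  · intro a ha b hb hab
    have := w.1.injective hab
    simpa [Fin.ext_iff] using this
  · intro v hv
    have hvp := (Finset.mem_filter.1 hv).1
    have hvs := (Finset.mem_filter.1 hv).2
    rw [mem_pset] at hvp
    refine ⟨(w.1.symm v : ℕ), ?_, ?_⟩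
    · apply Finset.mem_filter.2
      refine ⟨Finset.mem_range.2 hvp, ?_⟩
      rw [sword_neg_iff w (w.1.symm v).2]
      have h2 : vsgn w (w.1 (w.1.symm v)) = w.2 (w.1.symm v) := vsgn_apply w _
      rw [Equiv.apply_symm_apply] at h2
      rw [show (⟨((w.1.symm v : Fin n) : ℕ), (w.1.symm v).2⟩ : Fin n) = w.1.symm v
        from Fin.ext rfl]
      rw [← h2]
      simpa using hvs
    · rw [show (⟨((w.1.symm v : Fin n) : ℕ), _⟩ : Fin n) = w.1.symm v from Fin.ext rfl]
      exact Equiv.apply_symm_apply _ _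

lemma pixPlus_eq (w : Equiv.Perm (Fin n) × (Fin n → Bool)) :
    pixPlus n (sword n w)
      = ((pset n w).filter fun v : Fin n => vsgn w v = false).card := by
  unfold pixPlus
  have hqd : n - dlen n (sword n w) = qlen n w := rfl
  rw [hqd]
  have hq := qlen_le w
  apply Finset.card_bij (fun (i : ℕ) hi => w.1 ⟨i, by
    have := Finset.mem_range.1 (Finset.mem_filter.1 hi).1
    omega⟩)
  · intro i hi
    have hir := Finset.mem_range.1 (Finset.mem_filter.1 hi).1
    have hpos := (Finset.mem_filter.1 hi).2
    apply Finset.mem_filter.2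
    constructor
    · rw [mem_pset_apply]
      exact hir
    · rw [vsgn_apply]
      rw [sword_pos_iff w (by omega : i < n)] at hpos
      exact hpos
  · intro a ha b hb hab
    have := w.1.injective hab
    simpa [Fin.ext_iff] using this
  · intro v hv
    have hvp := (Finset.mem_filter.1 hv).1
    have hvs := (Finset.mem_filter.1 hv).2
    rw [mem_pset] at hvp
    refine ⟨(w.1.symm v : ℕ), ?_, ?_⟩
    · apply Finset.mem_filter.2
      refine ⟨Finset.mem_range.2 hvp, ?_⟩
      rw [sword_pos_iff w (w.1.symm v).2]
      have h2 : vsgn w (w.1 (w.1.symm v)) = w.2 (w.1.symm v) := vsgn_apply w _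
      rw [Equiv.apply_symm_apply] at h2
      rw [show (⟨((w.1.symm v : Fin n) : ℕ), (w.1.symm v).2⟩ : Fin n) = w.1.symm v
        from Fin.ext rfl]
      rw [← h2]
      exact hvs
    · rw [show (⟨((w.1.symm v : Fin n) : ℕ), _⟩ : Fin n) = w.1.symm v from Fin.ext rfl]
      exact Equiv.apply_symm_apply _ _

end Stats
section Weights

variable {n : ℕ} {R : Type*} [CommRing R] (Y0 Y1 Z : R)

lemma prod_bool_pow (s : Finset (Fin n)) (f : Fin n → Bool) (u v : R) :
    (∏ i ∈ s, (if f i = true then u else v))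
      = u ^ (s.filter fun i => f i = true).card
        * v ^ (s.filter fun i => f i = false).card := by
  rw [← Finset.prod_filter_mul_prod_filter_not s (fun i => f i = true)]
  congr 1
  · rw [Finset.prod_congr rfl (fun i hi => if_pos (Finset.mem_filter.1 hi).2),
      Finset.prod_const]
  · simp only [Bool.not_eq_true]
    rw [Finset.prod_congr rfl
        (fun i hi => if_neg (by simp [(Finset.mem_filter.1 hi).2])),
      Finset.prod_const]

/-- the weight of an element of the decomposition target -/
def gweight (R : Type*) [CommRing R] (Y0 Y1 Z : R) (t : DTarget n) : R :=
  (∏ v ∈ t.1, (if t.2.1 v = true then Y1 * Z else Y0))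
    * ∏ v ∈ (t.1ᶜ : Finset (Fin n)), (if t.2.1 v = true then Z else 1)

lemma weight_transfer (w : Equiv.Perm (Fin n) × (Fin n → Bool)) :
    Y0 ^ pixPlus n (sword n w) * Y1 ^ pixMinus n (sword n w) * Z ^ negStat n (sword n w)
      = gweight R Y0 Y1 Z (fmap n w) := by
  rw [pixPlus_eq, pixMinus_eq, negStat_eq]
  show _ = (∏ v ∈ pset n w, (if vsgn w v = true then Y1 * Z else Y0))
    * ∏ v ∈ ((pset n w)ᶜ : Finset (Fin n)), (if vsgn w v = true then Z else 1)
  rw [prod_bool_pow, prod_bool_pow]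
  have hiu : ((univ : Finset (Fin n)).filter fun v : Fin n => vsgn w v = true).card
      = ((pset n w).filter fun v => vsgn w v = true).card
        + (((pset n w)ᶜ : Finset (Fin n)).filter fun v => vsgn w v = true).card := by
    rw [← Finset.card_union_of_disjoint
      (Finset.disjoint_filter_filter disjoint_compl_right),
      ← Finset.filter_union, Finset.union_compl]
  rw [hiu, pow_add, mul_pow, one_pow]
  ring

lemma sum_bool_prod (S : Finset (Fin n)) :
    (∑ ξ : Fin n → Bool, (∏ v ∈ S, (if ξ v = true then Y1 * Z else Y0))
        * ∏ v ∈ (Sᶜ : Finset (Fin n)), (if ξ v = true then Z else 1))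
      = (Y0 + Y1 * Z) ^ S.card * (1 + Z) ^ (Sᶜ : Finset (Fin n)).card := by
  have h1 : ∀ ξ : Fin n → Bool,
      (∏ v ∈ S, (if ξ v = true then Y1 * Z else Y0))
          * ∏ v ∈ (Sᶜ : Finset (Fin n)), (if ξ v = true then Z else 1)
        = ∏ v : Fin n, (if v ∈ S then (if ξ v = true then Y1 * Z else Y0)
            else (if ξ v = true then Z else 1)) := by
    intro ξ
    rw [← Finset.prod_mul_prod_compl S]
    congr 1
    · exact Finset.prod_congr rfl (fun v hv => (if_pos hv).symm)
    · exact Finset.prod_congr rfl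
        (fun v hv => (if_neg (Finset.mem_compl.1 hv)).symm)
  rw [Finset.sum_congr rfl (fun ξ _ => h1 ξ)]
  have h2 := Finset.prod_univ_sum (fun _ : Fin n => (univ : Finset Bool))
    (fun v b => if v ∈ S then (if b = true then Y1 * Z else Y0)
      else (if b = true then Z else 1))
  rw [Fintype.piFinset_univ] at h2
  rw [← h2]
  have h3 : ∀ v : Fin n, (∑ b : Bool, (if v ∈ S then (if b = true then Y1 * Z else Y0)
      else (if b = true then Z else 1)))
      = if v ∈ S then Y0 + Y1 * Z else 1 + Z := by
    intro v
    rw [Fintype.sum_bool]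
    by_cases hv : v ∈ S
    · rw [if_pos hv, if_pos hv, if_pos hv]
      simp [add_comm]
    · rw [if_neg hv, if_neg hv, if_neg hv]
      simp [add_comm]
  rw [Finset.prod_congr rfl (fun v _ => h3 v)]
  rw [← Finset.prod_mul_prod_compl S]
  congr 1
  · rw [Finset.prod_congr rfl (fun v hv => if_pos hv), Finset.prod_const]
  · rw [Finset.prod_congr rfl (fun v hv => if_neg (Finset.mem_compl.1 hv)),
      Finset.prod_const]

/-- the number of desarrangement patterns of length `m` -/
def Dd (m : ℕ) : ℕ := Fintype.card {π : Equiv.Perm (Fin m) // IsDesar m (pword m π)}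

lemma sum_gweight :
    (∑ t : DTarget n, gweight R Y0 Y1 Z t)
      = ∑ S : Finset (Fin n), (Y0 + Y1 * Z) ^ S.card * (1 + Z) ^ (Sᶜ : Finset (Fin n)).card
          * (Dd (n - S.card) : R) := by
  rw [← Finset.univ_sigma_univ, Finset.sum_sigma]
  apply Finset.sum_congr rfl
  intro S _
  rw [Fintype.sum_prod_type]
  have hconst : ∀ ξ : Fin n → Bool,
      (∑ π : {π : Equiv.Perm (Fin (n - S.card)) //
          IsDesar (n - S.card) (pword (n - S.card) π)},
        gweight R Y0 Y1 Z ⟨S, (ξ, π)⟩)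
      = ((∏ v ∈ S, (if ξ v = true then Y1 * Z else Y0))
          * ∏ v ∈ (Sᶜ : Finset (Fin n)), (if ξ v = true then Z else 1))
          * (Dd (n - S.card) : R) := by
    intro ξ
    have hc : ∀ π : {π : Equiv.Perm (Fin (n - S.card)) //
        IsDesar (n - S.card) (pword (n - S.card) π)},
        gweight R Y0 Y1 Z ⟨S, (ξ, π)⟩
          = (∏ v ∈ S, (if ξ v = true then Y1 * Z else Y0))
            * ∏ v ∈ (Sᶜ : Finset (Fin n)), (if ξ v = true then Z else 1) := fun _ => rfl
    rw [Finset.sum_congr rfl (fun π _ => hc π), Finset.sum_const, nsmul_eq_mul, mul_comm]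
    congr 1
  rw [Finset.sum_congr rfl (fun ξ _ => hconst ξ), ← Finset.sum_mul, sum_bool_prod]

end Weights
section Counting

variable {n : ℕ}

lemma fmap_bijective (n : ℕ) : Function.Bijective (fmap n) :=
  ⟨fun a b h => by rw [← gmap_fmap a, h, gmap_fmap b],
   fun t => ⟨gmap n t, fmap_gmap t⟩⟩

lemma fact_eq_sum_Dd (m : ℕ) :
    m.factorial = ∑ S : Finset (Fin m), Dd (m - S.card) := by
  have hcard := Fintype.card_of_bijective (fmap_bijective m)
  rw [Fintype.card_prod, Fintype.card_perm, Fintype.card_fun, Fintype.card_bool,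
    Fintype.card_fin, Fintype.card_sigma] at hcard
  have he : ∀ S : Finset (Fin m),
      Fintype.card ((Fin m → Bool) × {π : Equiv.Perm (Fin (m - S.card)) //
        IsDesar (m - S.card) (pword (m - S.card) π)}) = 2 ^ m * Dd (m - S.card) := by
    intro S
    rw [Fintype.card_prod, Fintype.card_fun, Fintype.card_bool, Fintype.card_fin, Dd]
  rw [Finset.sum_congr rfl (fun S _ => he S), ← Finset.mul_sum] at hcard
  have h2 : 0 < 2 ^ m := Nat.pow_pos (by omega)
  rw [Nat.mul_comm] at hcard
  exact Nat.eq_of_mul_eq_mul_left h2 hcard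

lemma sum_powerset_fcard {α : Type*} (M : Finset α) (f : ℕ → ℕ) :
    ∑ u ∈ M.powerset, f u.card = ∑ j ∈ Finset.range (M.card + 1), M.card.choose j * f j := by
  rw [Finset.sum_powerset_apply_card]
  simp only [smul_eq_mul]

lemma fact_eq_choose (m : ℕ) :
    m.factorial = ∑ j ∈ Finset.range (m + 1), m.choose j * Dd (m - j) := by
  have h := fact_eq_sum_Dd m
  rw [← Finset.powerset_univ] at h
  rw [h, sum_powerset_fcard (univ : Finset (Fin m)) (fun k => Dd (m - k))]
  have : (univ : Finset (Fin m)).card = m := by simp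
  rw [this]

lemma fact_card_eq (M : Finset (Fin n)) :
    (M.card).factorial = ∑ u ∈ M.powerset, Dd (M.card - u.card) := by
  rw [sum_powerset_fcard M (fun k => Dd (M.card - k)), ← fact_eq_choose]

lemma count_fix (t : Finset (Fin n)) :
    ((univ : Finset (Equiv.Perm (Fin n))).filter fun σ => ∀ i ∈ t, σ i = i).card
      = (n - t.card).factorial := by
  rw [← Fintype.card_subtype]
  have e1 : {σ : Equiv.Perm (Fin n) // ∀ i ∈ t, σ i = i}
      ≃ {σ : Equiv.Perm (Fin n) // ∀ a, ¬ (a ∉ t) → σ a = a} := by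
    apply Equiv.subtypeEquivRight
    intro σ
    constructor
    · intro h a ha; exact h a (not_not.1 ha)
    · intro h i hi; exact h i (not_not.2 hi)
  have e2 := (Equiv.Perm.subtypeEquivSubtypePerm (fun a : Fin n => a ∉ t)).symm
  have hcard := Fintype.card_congr (e1.trans e2)
  rw [hcard, Fintype.card_perm]
  congr 1
  rw [Fintype.card_subtype]
  have he : ((univ : Finset (Fin n)).filter fun a => a ∉ t) = tᶜ := by
    ext a; simp [Finset.mem_compl]
  rw [he, card_compl']

lemma sum_compl_powerset_swap {M : Type*} [AddCommMonoid M]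
    (h : Finset (Fin n) → Finset (Fin n) → M) :
    (∑ t : Finset (Fin n), ∑ u ∈ (tᶜ : Finset (Fin n)).powerset, h t u)
      = ∑ U : Finset (Fin n), ∑ t ∈ U.powerset, h t (U \ t) := by
  have l1 : (∑ t : Finset (Fin n), ∑ u ∈ (tᶜ : Finset (Fin n)).powerset, h t u)
      = ∑ p ∈ (univ ×ˢ univ).filter
          (fun p : Finset (Fin n) × Finset (Fin n) => p.2 ⊆ p.1ᶜ), h p.1 p.2 := by
    rw [Finset.sum_filter, Finset.sum_product]
    apply Finset.sum_congr rfl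
    intro t _
    rw [← Finset.sum_filter]
    apply Finset.sum_congr _ (fun _ _ => rfl)
    ext u; simp [Finset.mem_powerset]
  have l2 : (∑ U : Finset (Fin n), ∑ t ∈ U.powerset, h t (U \ t))
      = ∑ p ∈ (univ ×ˢ univ).filter
          (fun p : Finset (Fin n) × Finset (Fin n) => p.2 ⊆ p.1), h p.2 (p.1 \ p.2) := by
    rw [Finset.sum_filter, Finset.sum_product]
    apply Finset.sum_congr rfl
    intro U _
    rw [← Finset.sum_filter]
    apply Finset.sum_congr _ (fun _ _ => rfl)
    ext u; simp [Finset.mem_powerset]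
  rw [l1, l2]
  apply Finset.sum_nbij' (fun p => (p.1 ∪ p.2, p.1)) (fun p => (p.2, p.1 \ p.2))
  · intro p hp
    simp only [Finset.mem_filter, Finset.mem_product, Finset.mem_univ, true_and] at hp ⊢
    exact Finset.subset_union_left
  · intro p hp
    simp only [Finset.mem_filter, Finset.mem_product, Finset.mem_univ, true_and] at hp ⊢
    intro a ha
    rw [Finset.mem_compl]
    exact (Finset.mem_sdiff.1 ha).2
  · intro p hp
    simp only [Finset.mem_filter, Finset.mem_product, Finset.mem_univ, true_and] at hp
    have hdisj : Disjoint p.1 p.2 :=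
      Finset.disjoint_left.2 (fun a ha1 ha2 => (Finset.mem_compl.1 (hp ha2)) ha1)
    rw [Finset.union_sdiff_cancel_left hdisj]
  · intro p hp
    simp only [Finset.mem_filter, Finset.mem_product, Finset.mem_univ, true_and] at hp
    rw [Finset.union_sdiff_of_subset hp]
  · intro p hp
    simp only [Finset.mem_filter, Finset.mem_product, Finset.mem_univ, true_and] at hp
    have hdisj : Disjoint p.1 p.2 :=
      Finset.disjoint_left.2 (fun a ha1 ha2 => (Finset.mem_compl.1 (hp ha2)) ha1)
    simp only
    rw [Finset.union_sdiff_cancel_left hdisj]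

end Counting
section LhsSide

variable {n : ℕ}

lemma sword_eq_succ_iff (w : Equiv.Perm (Fin n) × (Fin n → Bool)) {i : ℕ} (hi : i < n) :
    sword n w i = (i : ℤ) + 1 ↔ (w.1 ⟨i, hi⟩ = ⟨i, hi⟩ ∧ w.2 ⟨i, hi⟩ = false) := by
  unfold sword
  rw [dif_pos hi]
  rcases Bool.eq_false_or_eq_true (w.2 ⟨i, hi⟩) with hb | hb
  · rw [hb, if_pos rfl]
    apply iff_of_false
    · intro h
      have := Int.ofNat_nonneg ((w.1 ⟨i, hi⟩ : Fin n) : ℕ)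
      omega
    · rintro ⟨-, h2⟩
      simp at h2
  · rw [hb, if_neg (by simp)]
    constructor
    · intro h
      refine ⟨Fin.ext ?_, rfl⟩
      show ((w.1 ⟨i, hi⟩ : Fin n) : ℕ) = i
      omega
    · rintro ⟨h1, -⟩
      rw [h1]

lemma sword_eq_neg_iff (w : Equiv.Perm (Fin n) × (Fin n → Bool)) {i : ℕ} (hi : i < n) :
    sword n w i = -((i : ℤ) + 1) ↔ (w.1 ⟨i, hi⟩ = ⟨i, hi⟩ ∧ w.2 ⟨i, hi⟩ = true) := by
  unfold sword
  rw [dif_pos hi]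
  rcases Bool.eq_false_or_eq_true (w.2 ⟨i, hi⟩) with hb | hb
  · rw [hb, if_pos rfl]
    constructor
    · intro h
      refine ⟨Fin.ext ?_, rfl⟩
      show ((w.1 ⟨i, hi⟩ : Fin n) : ℕ) = i
      omega
    · rintro ⟨h1, -⟩
      rw [h1]
  · rw [hb, if_neg (by simp)]
    apply iff_of_false
    · intro h
      have := Int.ofNat_nonneg ((w.1 ⟨i, hi⟩ : Fin n) : ℕ)
      omega
    · rintro ⟨-, h2⟩
      simp at h2

lemma fixPlus_eq (w : Equiv.Perm (Fin n) × (Fin n → Bool)) :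
    fixPlus n (sword n w)
      = (((univ : Finset (Fin n)).filter fun i : Fin n => w.1 i = i).filter
          fun i : Fin n => w.2 i = false).card := by
  unfold fixPlus
  apply Finset.card_bij (fun (i : ℕ) hi =>
    (⟨i, Finset.mem_range.1 (Finset.mem_filter.1 hi).1⟩ : Fin n))
  · intro i hi
    have hir := Finset.mem_range.1 (Finset.mem_filter.1 hi).1
    have hval := (Finset.mem_filter.1 hi).2
    rw [sword_eq_succ_iff w hir] at hval
    exact Finset.mem_filter.2 ⟨Finset.mem_filter.2 ⟨Finset.mem_univ _, hval.1⟩, hval.2⟩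
  · intro a ha b hb hab
    simpa [Fin.ext_iff] using hab
  · intro v hv
    have h1 := (Finset.mem_filter.1 (Finset.mem_filter.1 hv).1).2
    have h2 := (Finset.mem_filter.1 hv).2
    refine ⟨(v : ℕ), ?_, Fin.ext rfl⟩
    apply Finset.mem_filter.2
    refine ⟨Finset.mem_range.2 v.2, ?_⟩
    rw [sword_eq_succ_iff w v.2]
    exact ⟨h1, h2⟩

lemma fixMinus_eq (w : Equiv.Perm (Fin n) × (Fin n → Bool)) :
    fixMinus n (sword n w)
      = (((univ : Finset (Fin n)).filter fun i : Fin n => w.1 i = i).filter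
          fun i : Fin n => w.2 i = true).card := by
  unfold fixMinus
  apply Finset.card_bij (fun (i : ℕ) hi =>
    (⟨i, Finset.mem_range.1 (Finset.mem_filter.1 hi).1⟩ : Fin n))
  · intro i hi
    have hir := Finset.mem_range.1 (Finset.mem_filter.1 hi).1
    have hval := (Finset.mem_filter.1 hi).2
    rw [sword_eq_neg_iff w hir] at hval
    exact Finset.mem_filter.2 ⟨Finset.mem_filter.2 ⟨Finset.mem_univ _, hval.1⟩, hval.2⟩
  · intro a ha b hb hab
    simpa [Fin.ext_iff] using hab
  · intro v hv
    have h1 := (Finset.mem_filter.1 (Finset.mem_filter.1 hv).1).2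
    have h2 := (Finset.mem_filter.1 hv).2
    refine ⟨(v : ℕ), ?_, Fin.ext rfl⟩
    apply Finset.mem_filter.2
    refine ⟨Finset.mem_range.2 v.2, ?_⟩
    rw [sword_eq_neg_iff w v.2]
    exact ⟨h1, h2⟩

lemma negStatL_eq (w : Equiv.Perm (Fin n) × (Fin n → Bool)) :
    negStat n (sword n w)
      = ((univ : Finset (Fin n)).filter fun i : Fin n => w.2 i = true).card := by
  unfold negStat
  apply Finset.card_bij (fun (i : ℕ) hi =>
    (⟨i, Finset.mem_range.1 (Finset.mem_filter.1 hi).1⟩ : Fin n))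
  · intro i hi
    have hir := Finset.mem_range.1 (Finset.mem_filter.1 hi).1
    have hval := (Finset.mem_filter.1 hi).2
    rw [sword_neg_iff w hir] at hval
    exact Finset.mem_filter.2 ⟨Finset.mem_univ _, hval⟩
  · intro a ha b hb hab
    simpa [Fin.ext_iff] using hab
  · intro v hv
    have h2 := (Finset.mem_filter.1 hv).2
    refine ⟨(v : ℕ), ?_, Fin.ext rfl⟩
    apply Finset.mem_filter.2
    refine ⟨Finset.mem_range.2 v.2, ?_⟩
    rw [sword_neg_iff w v.2]
    exact h2

variable {R : Type*} [CommRing R] (Y0 Y1 Z : R)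

lemma lhs_weight (w : Equiv.Perm (Fin n) × (Fin n → Bool)) :
    Y0 ^ fixPlus n (sword n w) * Y1 ^ fixMinus n (sword n w) * Z ^ negStat n (sword n w)
      = ∏ i : Fin n, (if w.1 i = i then (if w.2 i = true then Y1 * Z else Y0)
          else (if w.2 i = true then Z else 1)) := by
  rw [fixPlus_eq, fixMinus_eq, negStatL_eq]
  rw [← Finset.prod_filter_mul_prod_filter_not univ (fun i : Fin n => w.1 i = i)]
  rw [Finset.prod_congr rfl (fun i hi => if_pos (Finset.mem_filter.1 hi).2),
      Finset.prod_congr rfl (fun i hi => if_neg (Finset.mem_filter.1 hi).2)]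
  rw [prod_bool_pow, prod_bool_pow]
  have hiu : ((univ : Finset (Fin n)).filter fun i : Fin n => w.2 i = true).card
      = (((univ : Finset (Fin n)).filter fun i : Fin n => w.1 i = i).filter
          fun i => w.2 i = true).card
        + (((univ : Finset (Fin n)).filter fun i : Fin n => ¬ w.1 i = i).filter
          fun i => w.2 i = true).card := by
    rw [← Finset.card_union_of_disjoint]
    · congr 1
      ext i
      simp only [Finset.mem_union, Finset.mem_filter, Finset.mem_univ, true_and]
      tauto
    · apply Finset.disjoint_filter_filter
      apply Finset.disjoint_filter_filter'
      exact disjoint_compl_right.mono_right (by intro i hi; exact hi)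
  rw [hiu, pow_add, mul_pow, one_pow]
  ring

lemma lhs_sum :
    (∑ w : Equiv.Perm (Fin n) × (Fin n → Bool),
        Y0 ^ fixPlus n (sword n w) * Y1 ^ fixMinus n (sword n w) * Z ^ negStat n (sword n w))
      = ∑ t : Finset (Fin n), (Y0 + Y1 * Z - (1 + Z)) ^ t.card
          * (1 + Z) ^ (tᶜ : Finset (Fin n)).card * ((n - t.card).factorial : R) := by
  rw [Finset.sum_congr rfl (fun w _ => lhs_weight Y0 Y1 Z w)]
  rw [Fintype.sum_prod_type]
  -- sum over signs
  have hσ : ∀ σ : Equiv.Perm (Fin n),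
      (∑ ε : Fin n → Bool, ∏ i : Fin n,
        (if σ i = i then (if ε i = true then Y1 * Z else Y0)
          else (if ε i = true then Z else 1)))
      = ∏ i : Fin n, (if σ i = i then Y0 + Y1 * Z else 1 + Z) := by
    intro σ
    have h2 := Finset.prod_univ_sum (fun _ : Fin n => (univ : Finset Bool))
      (fun i b => if σ i = i then (if b = true then Y1 * Z else Y0)
        else (if b = true then Z else 1))
    rw [Fintype.piFinset_univ] at h2
    rw [← h2]
    apply Finset.prod_congr rfl
    intro i _
    rw [Fintype.sum_bool]
    by_cases hv : σ i = i
    · rw [if_pos hv, if_pos hv, if_pos hv]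
      simp [add_comm]
    · rw [if_neg hv, if_neg hv, if_neg hv]
      simp [add_comm]
  rw [Finset.sum_congr rfl (fun σ _ => hσ σ)]
  -- binomial-type expansion
  have hexp : ∀ σ : Equiv.Perm (Fin n),
      (∏ i : Fin n, (if σ i = i then Y0 + Y1 * Z else 1 + Z))
      = ∑ t : Finset (Fin n),
          (∏ i ∈ t, (if σ i = i then Y0 + Y1 * Z - (1 + Z) else 0))
            * (1 + Z) ^ (tᶜ : Finset (Fin n)).card := by
    intro σ
    have h3 : ∀ i : Fin n, (if σ i = i then Y0 + Y1 * Z else 1 + Z)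
        = (if σ i = i then Y0 + Y1 * Z - (1 + Z) else 0) + (1 + Z) := by
      intro i
      by_cases hv : σ i = i
      · rw [if_pos hv, if_pos hv]; ring
      · rw [if_neg hv, if_neg hv]; ring
    rw [Finset.prod_congr rfl (fun i _ => h3 i), Finset.prod_add, Finset.powerset_univ]
    apply Finset.sum_congr rfl
    intro t _
    rw [Finset.prod_const, ← Finset.compl_eq_univ_sdiff]
  rw [Finset.sum_congr rfl (fun σ _ => hexp σ)]
  rw [Finset.sum_comm]
  apply Finset.sum_congr rfl
  intro t _
  have h4 : ∀ σ : Equiv.Perm (Fin n),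
      (∏ i ∈ t, (if σ i = i then Y0 + Y1 * Z - (1 + Z) else 0))
      = if (∀ i ∈ t, σ i = i) then (Y0 + Y1 * Z - (1 + Z)) ^ t.card else 0 := by
    intro σ
    by_cases hall : ∀ i ∈ t, σ i = i
    · rw [if_pos hall, Finset.prod_congr rfl (fun i hi => if_pos (hall i hi)),
        Finset.prod_const]
    · rw [if_neg hall]
      push_neg at hall
      obtain ⟨i, hi, hne⟩ := hall
      exact Finset.prod_eq_zero hi (if_neg hne)
  have h5 : ∀ σ : Equiv.Perm (Fin n),
      (∏ i ∈ t, (if σ i = i then Y0 + Y1 * Z - (1 + Z) else 0))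
          * (1 + Z) ^ (tᶜ : Finset (Fin n)).card
        = (if (∀ i ∈ t, σ i = i) then (Y0 + Y1 * Z - (1 + Z)) ^ t.card else 0)
          * (1 + Z) ^ (tᶜ : Finset (Fin n)).card := fun σ => by rw [h4 σ]
  rw [Finset.sum_congr rfl (fun σ _ => h5 σ)]
  rw [← Finset.sum_mul, ← Finset.sum_filter, Finset.sum_const, count_fix t, nsmul_eq_mul]
  ring

end LhsSide
theorem stmt2 (n : ℕ) (R : Type*) [CommRing R] (Y0 Y1 Z : R) :
    (∑ w : Equiv.Perm (Fin n) × (Fin n → Bool),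
        Y0 ^ fixPlus n (sword n w) * Y1 ^ fixMinus n (sword n w) * Z ^ negStat n (sword n w))
      = ∑ w : Equiv.Perm (Fin n) × (Fin n → Bool),
        Y0 ^ pixPlus n (sword n w) * Y1 ^ pixMinus n (sword n w) * Z ^ negStat n (sword n w) := by
  have hRHS : (∑ w : Equiv.Perm (Fin n) × (Fin n → Bool),
      Y0 ^ pixPlus n (sword n w) * Y1 ^ pixMinus n (sword n w) * Z ^ negStat n (sword n w))
      = ∑ S : Finset (Fin n), (Y0 + Y1 * Z) ^ S.card * (1 + Z) ^ (Sᶜ : Finset (Fin n)).card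
          * (Dd (n - S.card) : R) := by
    rw [Fintype.sum_bijective (fmap n) (fmap_bijective n) _ _
      (fun w => weight_transfer Y0 Y1 Z w)]
    exact sum_gweight Y0 Y1 Z
  rw [hRHS, lhs_sum Y0 Y1 Z]
  have hA : ∀ t : Finset (Fin n), ((n - t.card).factorial : R)
      = ∑ u ∈ (tᶜ : Finset (Fin n)).powerset, (Dd (n - t.card - u.card) : R) := by
    intro t
    have h1 := fact_card_eq (tᶜ : Finset (Fin n))
    rw [card_compl'] at h1
    exact_mod_cast congrArg (fun k : ℕ => (k : R)) h1
  calc (∑ t : Finset (Fin n), (Y0 + Y1 * Z - (1 + Z)) ^ t.card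
          * (1 + Z) ^ (tᶜ : Finset (Fin n)).card * ((n - t.card).factorial : R))
      = ∑ t : Finset (Fin n), ∑ u ∈ (tᶜ : Finset (Fin n)).powerset,
          (Y0 + Y1 * Z - (1 + Z)) ^ t.card * (1 + Z) ^ (tᶜ : Finset (Fin n)).card
            * (Dd (n - t.card - u.card) : R) := by
        apply Finset.sum_congr rfl
        intro t _
        rw [hA t, Finset.mul_sum]
    _ = ∑ U : Finset (Fin n), ∑ t ∈ U.powerset,
          (Y0 + Y1 * Z - (1 + Z)) ^ t.card * (1 + Z) ^ (tᶜ : Finset (Fin n)).card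
            * (Dd (n - t.card - (U \ t).card) : R) :=
        sum_compl_powerset_swap (fun t u => (Y0 + Y1 * Z - (1 + Z)) ^ t.card
          * (1 + Z) ^ (tᶜ : Finset (Fin n)).card * (Dd (n - t.card - u.card) : R))
    _ = ∑ S : Finset (Fin n), (Y0 + Y1 * Z) ^ S.card * (1 + Z) ^ (Sᶜ : Finset (Fin n)).card
          * (Dd (n - S.card) : R) := by
        apply Finset.sum_congr rfl
        intro U _
        have hcomb : ∀ t ∈ U.powerset,
            (Y0 + Y1 * Z - (1 + Z)) ^ t.card * (1 + Z) ^ (tᶜ : Finset (Fin n)).card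
              * (Dd (n - t.card - (U \ t).card) : R)
            = ((Y0 + Y1 * Z - (1 + Z)) ^ t.card * (1 + Z) ^ (U.card - t.card))
              * ((1 + Z) ^ (Uᶜ : Finset (Fin n)).card * (Dd (n - U.card) : R)) := by
          intro t ht
          have hsub := Finset.mem_powerset.1 ht
          have h1 : (U \ t).card = U.card - t.card := Finset.card_sdiff_of_subset hsub
          have h2 : t.card ≤ U.card := Finset.card_le_card hsub
          have h3 : U.card ≤ n := by
            have := Finset.card_le_univ U
            simpa using this
          have h4 : n - t.card - (U.card - t.card) = n - U.card := by omega
          have h5 : (tᶜ : Finset (Fin n)).card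
              = (Uᶜ : Finset (Fin n)).card + (U.card - t.card) := by
            rw [card_compl', card_compl']
            have := Finset.card_le_univ t
            simp only [Finset.card_univ, Fintype.card_fin] at this
            omega
          rw [h1, h4, h5, pow_add]
          ring
        rw [Finset.sum_congr rfl hcomb, ← Finset.sum_mul,
          Finset.sum_pow_mul_eq_add_pow, sub_add_cancel]
        ring
end
end
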